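/- arXiv:2409.11907 — 5 statements merged into one kernel-verified Lean document; each statement's English description precedes it below -/
import Mathlib

section
/- Let d ≥ 2 and suppose [n] is the disjoint union of sets X_1,…,X_e. Let D = {(A_i^{(1)},…,A_i^{(d)})}_{1≤i≤m} be a skew Bollobás system of d-partitions of [n]. Let S = ⋃_{i=1}^m ⋃_{r=1}^d A_i^{(r)} and s_k = |S ∩ X_k| for k ∈ [e]. Then ∑_{i=1}^m ( ∏_{k=1}^e binom(∑_{r=1}^d |A_i^{(r)} ∩ X_k|; |A_i^{(1)} ∩ X_k|,…,|A_i^{(d)} ∩ X_k|) )^{-1} ≤ ∏_{k=1}^e binom(s_k + d - 1, d - 1). -/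
/-!
Order each class `S ∩ X_k` independently by a uniformly random arrangement
`Fin s_k ≃ S ∩ X_k`, and call the system `i` sorted if in every class all elements of
`A_i^{(1)}` come before those of `A_i^{(2)}`, and so on. Class by class, `i` is sorted with
probability at least `1 / multinomial(|A_i^{(1)} ∩ X_k|, …, |A_i^{(d)} ∩ X_k|)`. For a fixed
arrangement, extend the labels of each sorted system to monotone maps `Fin s_k → Fin d`; by the
skew condition two sorted systems never get the same maps, so at most
`∏_k C(s_k + d - 1, d - 1)` systems are sorted. Averaging over arrangements gives the bound.
-/

open Finset Function
open scoped Nat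

namespace SkewBollobas

def PartialMonotone {α γ : Type*} [Preorder α] [Preorder γ] (w : α → Option γ) : Prop :=
  ∀ ⦃p q : α⦄ ⦃r r' : γ⦄, p ≤ q → w p = some r → w q = some r' → r ≤ r'

instance {α γ : Type*} [Fintype α] [Fintype γ] [LinearOrder α] [LinearOrder γ] :
    DecidablePred (PartialMonotone : (α → Option γ) → Prop) := fun _ => by
  unfold PartialMonotone; infer_instance

theorem PartialMonotone.exists_monotone_extension {α γ : Type*} [Fintype α] [LinearOrder α]
    [SemilatticeSup γ] [OrderBot γ] {w : α → Option γ} (hw : PartialMonotone w) :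
    ∃ c : α → γ, Monotone c ∧ ∀ p r, w p = some r → c p = r := by
  refine ⟨fun p => ({q | q ≤ p} : Finset α).sup fun q => (w q).getD ⊥, ?_, ?_⟩
  · intro p p' hpp'
    exact Finset.sup_mono fun q hq => by
      simp only [mem_filter, mem_univ, true_and] at hq ⊢
      exact hq.trans hpp'
  · intro p r hp
    apply le_antisymm
    · refine Finset.sup_le fun q hq => ?_
      cases hq' : w q with
      | none => simp
      | some r' => simpa using hw (by simpa using hq) hq' hp
    · simpa [hp] using
        Finset.le_sup (f := fun q => (w q).getD ⊥) (by simp : p ∈ ({q | q ≤ p} : Finset α))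

theorem card_monotone_le {γ : Type*} [Fintype γ] [LinearOrder γ] (n : ℕ) :
    #{c : Fin n → γ | Monotone c} ≤ (Fintype.card γ + n - 1).choose n := by
  rw [← Sym.card_sym_eq_choose, ← card_univ]
  refine card_le_card_of_injOn (fun c => ⟨(List.ofFn c : Multiset γ), by simp⟩)
    (fun _ _ => mem_coe.2 (mem_univ _)) fun c hc c' hc' h => ?_
  simp only [coe_filter, mem_univ, true_and, Set.mem_ofPred_eq] at hc hc'
  have hperm : (List.ofFn c).Perm (List.ofFn c') :=
    Multiset.coe_eq_coe.1 (congrArg Subtype.val h)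
  exact List.ofFn_injective (hperm.eq_of_sortedLE (by simpa) (by simpa))

section Arrangements

variable {α β γ : Type*}

theorem card_comp_eq_comp [Fintype α] [Fintype β] [DecidableEq α] [DecidableEq β] {ι : Type*}
    [DecidableEq ι] (f : β → ι) (σ₀ : α ≃ β) :
    #{σ : α ≃ β | f ∘ σ = f ∘ σ₀} = Fintype.card {g : Equiv.Perm β // f ∘ g = f} := by
  rw [Fintype.card_subtype]
  refine card_bij' (fun σ _ => σ₀.symm.trans σ) (fun g _ => σ₀.trans g) ?_ ?_ ?_ ?_
  · intro σ hσ
    simp only [mem_filter, mem_univ, true_and] at hσ ⊢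
    ext x
    simpa using congrFun hσ (σ₀.symm x)
  · intro g hg
    simp only [mem_filter, mem_univ, true_and] at hg ⊢
    ext p
    simpa using congrFun hg (σ₀ p)
  · intro σ _
    ext; simp
  · intro g _
    ext; simp

/-- The permutations preserving `labelOrSelf ℓ` are those permuting each label class and fixing
the unlabelled points. -/
def labelOrSelf (ℓ : β → Option γ) (x : β) : γ ⊕ β := (ℓ x).elim (.inr x) .inl

def forgetLabels (ℓ : β → Option γ) (x : β) : Option Unit := (ℓ x).map fun _ => ()

theorem getLeft?_comp_labelOrSelf (ℓ : β → Option γ) : Sum.getLeft? ∘ labelOrSelf ℓ = ℓ := by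
  funext x
  cases h : ℓ x <;> simp [labelOrSelf, h]

theorem labelOrSelf_forgetLabels (ℓ : β → Option γ) :
    labelOrSelf (forgetLabels ℓ) = Sum.map (fun _ => ()) id ∘ labelOrSelf ℓ := by
  funext x
  cases h : ℓ x <;> simp [labelOrSelf, forgetLabels, h]

theorem card_stabilizer_labelOrSelf [Fintype β] [DecidableEq β] [Fintype γ] [DecidableEq γ]
    (ℓ : β → Option γ) :
    Fintype.card {g : Equiv.Perm β // labelOrSelf ℓ ∘ g = labelOrSelf ℓ}
      = ∏ c, (#{x | ℓ x = some c})! := by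
  have hfree : ∀ y, Fintype.card {x // labelOrSelf ℓ x = .inr y} ≤ 1 := fun y =>
    Fintype.card_le_one_iff.2 fun a b => Subtype.ext <| by
      have ha := a.2; have hb := b.2
      cases h : ℓ a <;> cases h' : ℓ b <;> simp_all [labelOrSelf]
  rw [DomMulAct.stabilizer_card, Fintype.prod_sum_type,
    prod_eq_one fun y _ => Nat.factorial_eq_one.2 (hfree y), mul_one]
  refine prod_congr rfl fun c _ => ?_
  rw [Fintype.card_subtype]
  congr 3
  ext x
  cases h : ℓ x <;> simp [labelOrSelf, h]

end Arrangements

section Sorting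

variable {β : Type*} [Fintype β] [DecidableEq β] {n d : ℕ}

theorem exists_partialMonotone_comp_eq (ℓ : β → Option (Fin d)) (σ₁ : Fin n ≃ β) :
    ∃ σ : Fin n ≃ β, PartialMonotone (ℓ ∘ σ) ∧
      labelOrSelf (forgetLabels ℓ) ∘ σ = labelOrSelf (forgetLabels ℓ) ∘ σ₁ := by
  set C : Finset (Fin n ≃ β) :=
    {σ | labelOrSelf (forgetLabels ℓ) ∘ σ = labelOrSelf (forgetLabels ℓ) ∘ σ₁}
  -- Swapping the entries of an out-of-order pair of positions stays in `C` and raises `weight`.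
  let weight : (Fin n ≃ β) → ℤ := fun σ =>
    ∑ p : Fin n, ((p : ℕ) : ℤ) * (ℓ (σ p)).elim 0 fun r => (r : ℤ)
  obtain ⟨σ, hσC, hmax⟩ := C.exists_max_image weight ⟨σ₁, by simp [C]⟩
  refine ⟨σ, fun p q r r' hpq hp hq => ?_, (mem_filter.1 hσC).2⟩
  by_contra! hlt
  simp only [Function.comp_apply] at hp hq
  have hpq' : p < q := lt_of_le_of_ne hpq fun h => by subst h; simp_all
  set τ := (Equiv.swap p q).trans σ
  have hτC : τ ∈ C := by
    simp only [C, mem_filter, mem_univ, true_and] at hσC ⊢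
    rw [← hσC]
    funext x
    by_cases hxp : x = p
    · subst hxp; simp [τ, labelOrSelf, forgetLabels, hp, hq]
    by_cases hxq : x = q
    · subst hxq; simp [τ, labelOrSelf, forgetLabels, hp, hq]
    · simp [τ, Equiv.swap_apply_of_ne_of_ne hxp hxq]
  have hgain : weight τ - weight σ = ((q : ℤ) - p) * ((r : ℤ) - r') := by
    simp only [weight, ← sum_sub_distrib]
    rw [Fintype.sum_eq_add p q hpq'.ne fun x hx => by
      simp [τ, Equiv.swap_apply_of_ne_of_ne hx.1 hx.2]]
    simp only [τ, Equiv.trans_apply, Equiv.swap_apply_left, Equiv.swap_apply_right, hp, hq,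
      Option.elim_some]
    ring
  have : weight σ < weight τ := by
    have h1 : (0 : ℤ) < (q : ℤ) - p := by simp only [sub_pos, Nat.cast_lt]; exact hpq'
    have h2 : (0 : ℤ) < (r : ℤ) - r' := by simp only [sub_pos, Nat.cast_lt]; exact hlt
    linarith [mul_pos h1 h2]
  exact (hmax τ hτC).not_gt this

theorem factorial_le_card_partialMonotone_mul_multinomial (ℓ : β → Option (Fin d))
    (hn : Fintype.card β = n) :
    n ! ≤ #{σ : Fin n ≃ β | PartialMonotone (ℓ ∘ σ)}
      * Nat.multinomial univ fun r => #{x | ℓ x = some r} := by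
  set b : Fin d → ℕ := fun r => #{x | ℓ x = some r}
  have hu : #{x | forgetLabels ℓ x = some ()} = ∑ r, b r := by
    have hunion : ({x | forgetLabels ℓ x = some ()} : Finset β)
        = univ.biUnion fun r => {x | ℓ x = some r} := by
      ext x
      cases h : ℓ x <;> simp [forgetLabels, h]
    rw [hunion, card_biUnion fun r _ r' _ hrr' => disjoint_filter.2 fun x _ h h' =>
      hrr' (Option.some_injective _ (h.symm.trans h'))]
  -- Each class of arrangements with the same unlabelled pattern has `(∑ r, b r)!` members, of
  -- which at least `∏ r, (b r)!` are sorted: those with the labels of a sorted member.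
  have hdc := card_mul_le_card_mul
    (fun τ σ : Fin n ≃ β => labelOrSelf (forgetLabels ℓ) ∘ τ = labelOrSelf (forgetLabels ℓ) ∘ σ)
    (s := univ) (t := {σ | PartialMonotone (ℓ ∘ σ)}) (m := ∏ r, (b r)!) (n := (∑ r, b r)!)
    ?_ ?_
  · rw [card_univ, Fintype.card_equiv (Fintype.equivFinOfCardEq hn).symm, Fintype.card_fin,
      ← Nat.multinomial_spec, mul_left_comm, mul_comm (n !)] at hdc
    exact Nat.le_of_mul_le_mul_left hdc (prod_pos fun r _ => Nat.factorial_pos _)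
  · intro τ _
    obtain ⟨σ₀, hσ₀, hσ₀τ⟩ := exists_partialMonotone_comp_eq ℓ τ
    calc ∏ r, (b r)! = #{σ : Fin n ≃ β | labelOrSelf ℓ ∘ σ = labelOrSelf ℓ ∘ σ₀} := by
          rw [card_comp_eq_comp, card_stabilizer_labelOrSelf]
      _ ≤ _ := card_le_card fun σ hσ => by
          simp only [mem_filter, mem_univ, true_and, bipartiteAbove] at hσ ⊢
          refine ⟨?_, ?_⟩
          · rwa [← getLeft?_comp_labelOrSelf ℓ, Function.comp_assoc, hσ, ← Function.comp_assoc,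
              getLeft?_comp_labelOrSelf]
          · rw [← hσ₀τ, labelOrSelf_forgetLabels, Function.comp_assoc, Function.comp_assoc, hσ]
  · intro σ _
    rw [bipartiteBelow, card_comp_eq_comp,
      card_stabilizer_labelOrSelf, Fintype.prod_unique, hu]

end Sorting

section Classes

variable {κ : Type*} {β : κ → Type*} [∀ k, Fintype (β k)] {m d : ℕ}

def IsSkew (L : Fin m → ∀ k, β k → Option (Fin d)) : Prop :=
  ∀ i j, i < j → ∃ k x p q, p < q ∧ L i k x = some p ∧ L j k x = some q

theorem prod_factorial_le_card_mul_prod_multinomial [Fintype κ] [DecidableEq κ]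
    [∀ k, DecidableEq (β k)] (L : ∀ k, β k → Option (Fin d)) :
    ∏ k, (Fintype.card (β k))!
      ≤ #{ω : ∀ k, Fin (Fintype.card (β k)) ≃ β k | ∀ k, PartialMonotone (L k ∘ ω k)}
        * ∏ k, Nat.multinomial univ fun r => #{x | L k x = some r} := by
  have hpi : ({ω : ∀ k, Fin (Fintype.card (β k)) ≃ β k | ∀ k, PartialMonotone (L k ∘ ω k)}
      : Finset _) = Fintype.piFinset fun k =>
        ({σ | PartialMonotone (L k ∘ σ)} : Finset (Fin (Fintype.card (β k)) ≃ β k)) := by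
    ext ω
    simp [Fintype.mem_piFinset]
  rw [hpi, Fintype.card_piFinset, ← prod_mul_distrib]
  exact prod_le_prod' fun k _ =>
    factorial_le_card_partialMonotone_mul_multinomial (L k) rfl

theorem IsSkew.ne_of_lt {L : Fin m → ∀ k, β k → Option (Fin d)} (hL : IsSkew L)
    (ω : ∀ k, Fin (Fintype.card (β k)) ≃ β k) {i j : Fin m} (hij : i < j)
    {c c' : ∀ k, Fin (Fintype.card (β k)) → Fin d}
    (hc : ∀ k p r, L i k (ω k p) = some r → c k p = r)
    (hc' : ∀ k p r, L j k (ω k p) = some r → c' k p = r) : c ≠ c' := by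
  rintro rfl
  obtain ⟨k, x, p, q, hpq, hp, hq⟩ := hL i j hij
  have hcp := hc k ((ω k).symm x) p (by simpa using hp)
  rw [hc' k ((ω k).symm x) q (by simpa using hq)] at hcp
  exact hpq.ne' hcp

theorem card_partialMonotone_le [Fintype κ] [DecidableEq κ] [NeZero d]
    {L : Fin m → ∀ k, β k → Option (Fin d)} (hL : IsSkew L)
    (ω : ∀ k, Fin (Fintype.card (β k)) ≃ β k) :
    #{i | ∀ k, PartialMonotone (L i k ∘ ω k)}
      ≤ ∏ k, (Fintype.card (β k) + d - 1).choose (d - 1) := by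
  have hcut : ∀ i, ∃ c : ∀ k, Fin (Fintype.card (β k)) → Fin d,
      (∀ k, PartialMonotone (L i k ∘ ω k)) →
        ∀ k, Monotone (c k) ∧ ∀ p r, L i k (ω k p) = some r → c k p = r := by
    intro i
    by_cases hi : ∀ k, PartialMonotone (L i k ∘ ω k)
    · choose c hc using fun k => (hi k).exists_monotone_extension
      exact ⟨c, fun _ k => hc k⟩
    · exact ⟨fun _ _ => ⊥, fun h => absurd h hi⟩
  choose c hc using hcut
  have hinj : Set.InjOn c {i | ∀ k, PartialMonotone (L i k ∘ ω k)} := by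
    intro i hi j hj hij
    by_contra hne
    rcases lt_or_gt_of_ne hne with h | h
    · exact hL.ne_of_lt ω h (fun k => (hc i hi k).2) (fun k => (hc j hj k).2) hij
    · exact hL.ne_of_lt ω h (fun k => (hc j hj k).2) (fun k => (hc i hi k).2) hij.symm
  calc #{i | ∀ k, PartialMonotone (L i k ∘ ω k)}
      ≤ #(Fintype.piFinset fun k =>
          ({f | Monotone f} : Finset (Fin (Fintype.card (β k)) → Fin d))) := by
        refine card_le_card_of_injOn c (fun i hi => ?_) (by simpa using hinj)
        simp only [coe_filter, mem_univ, true_and, Set.mem_ofPred_eq] at hi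
        simpa [Fintype.mem_piFinset] using fun k => ((hc i hi k).1)
    _ ≤ ∏ k, (Fintype.card (β k) + d - 1).choose (d - 1) := by
        rw [Fintype.card_piFinset]
        refine prod_le_prod' fun k _ => (card_monotone_le _).trans_eq ?_
        have := NeZero.pos d
        rw [Fintype.card_fin,
          show d + Fintype.card (β k) - 1 = Fintype.card (β k) + (d - 1) by omega,
          Nat.choose_symm_add]
        congr 1
        omega

theorem sum_inv_prod_multinomial_le [Fintype κ] [DecidableEq κ] [∀ k, DecidableEq (β k)]
    [NeZero d] {L : Fin m → ∀ k, β k → Option (Fin d)} (hL : IsSkew L) :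
    ∑ i, (∏ k, (Nat.multinomial univ (fun r => #{x | L i k x = some r}) : ℚ))⁻¹
      ≤ ∏ k, ((Fintype.card (β k) + d - 1).choose (d - 1) : ℚ) := by
  set N := ∏ k, (Fintype.card (β k))!
  have hN : (0 : ℚ) < N := Nat.cast_pos.2 (prod_pos fun k _ => Nat.factorial_pos _)
  have hΩ : Fintype.card (∀ k, Fin (Fintype.card (β k)) ≃ β k) = N := by
    simp only [Fintype.card_pi, N]
    exact prod_congr rfl fun k _ => by
      rw [Fintype.card_equiv (Fintype.equivFin (β k)).symm, Fintype.card_fin]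
  have hcount :
      ∑ i, #{ω : ∀ k, Fin (Fintype.card (β k)) ≃ β k | ∀ k, PartialMonotone (L i k ∘ ω k)}
        ≤ N * ∏ k, (Fintype.card (β k) + d - 1).choose (d - 1) := by
    have := sum_card_bipartiteAbove_eq_sum_card_bipartiteBelow
      (fun i (ω : ∀ k, Fin (Fintype.card (β k)) ≃ β k) => ∀ k, PartialMonotone (L i k ∘ ω k))
      (s := univ) (t := univ)
    simp only [bipartiteAbove, bipartiteBelow] at this
    rw [this, ← hΩ, ← card_univ, ← smul_eq_mul, ← sum_const]
    exact sum_le_sum fun ω _ => card_partialMonotone_le hL ω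
  refine le_of_mul_le_mul_left ?_ hN
  calc (N : ℚ) * ∑ i, (∏ k, (Nat.multinomial univ (fun r => #{x | L i k x = some r}) : ℚ))⁻¹
      ≤ ∑ i, (#{ω : ∀ k, Fin (Fintype.card (β k)) ≃ β k |
          ∀ k, PartialMonotone (L i k ∘ ω k)} : ℚ) := by
        rw [mul_sum]
        refine sum_le_sum fun i _ => ?_
        rw [← Nat.cast_prod, ← div_eq_mul_inv,
          div_le_iff₀ (Nat.cast_pos.2 (prod_pos fun k _ => Nat.multinomial_pos _ _))]
        exact_mod_cast prod_factorial_le_card_mul_prod_multinomial (L i)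
    _ ≤ N * ∏ k, ((Fintype.card (β k) + d - 1).choose (d - 1) : ℚ) := by
        exact_mod_cast hcount

end Classes

def partIndex {α : Type*} [DecidableEq α] {d : ℕ} (A : Fin d → Finset α) (x : α) :
    Option (Fin d) :=
  if h : ∃ r, x ∈ A r then some (Fin.find _ h) else none

theorem partIndex_eq_some_iff {α : Type*} [DecidableEq α] {d : ℕ} {A : Fin d → Finset α}
    (hA : Pairwise (Disjoint on A)) {x : α} {r : Fin d} : partIndex A x = some r ↔ x ∈ A r := by
  unfold partIndex
  split_ifs with h
  · rw [Option.some.injEq]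
    refine ⟨fun h' => h' ▸ Fin.find_spec h, fun hx => ?_⟩
    by_contra hne
    exact disjoint_left.1 (hA hne) (Fin.find_spec h) hx
  · simpa using fun hx => h ⟨r, hx⟩

end SkewBollobas

open SkewBollobas

theorem skew_bollobas_partitioned_general (n d e m : ℕ) (hd : 2 ≤ d)
    (X : Fin e → Finset ℕ)
    (hXcover : Finset.univ.biUnion X = Finset.Icc 1 n)
    (A : Fin m → Fin d → Finset ℕ)
    (hAsub : ∀ i r, A i r ⊆ Finset.Icc 1 n)
    (hAdisj : ∀ i, ∀ p q : Fin d, p ≠ q → Disjoint (A i p) (A i q))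
    (hskew : ∀ i j : Fin m, i < j →
      ∃ p q : Fin d, p < q ∧ ((A i p) ∩ (A j q)).Nonempty) :
    ∑ i : Fin m, (∏ k : Fin e,
        ((Nat.multinomial Finset.univ
          fun r : Fin d => ((A i r) ∩ X k).card : ℕ) : ℚ))⁻¹
      ≤ ∏ k : Fin e,
          (((((Finset.univ.biUnion fun i : Fin m =>
                Finset.univ.biUnion fun r : Fin d => A i r) ∩ X k).card
              + d - 1).choose (d - 1) : ℕ) : ℚ) := by
  have : NeZero d := ⟨by omega⟩
  set S := univ.biUnion fun i : Fin m => univ.biUnion fun r : Fin d => A i r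
  have hAS : ∀ i r, A i r ⊆ S := fun i r x hx => by
    simp only [S, mem_biUnion, mem_univ, true_and]
    exact ⟨i, r, hx⟩
  have hpart : ∀ i x r, partIndex (A i) x = some r ↔ x ∈ A i r := fun i _ _ =>
    partIndex_eq_some_iff fun p q => hAdisj i p q
  let L : Fin m → ∀ k : Fin e, ↥(S ∩ X k) → Option (Fin d) := fun i _ x => partIndex (A i) x
  have hL : IsSkew L := by
    intro i j hij
    obtain ⟨p, q, hpq, x, hx⟩ := hskew i j hij
    rw [mem_inter] at hx
    obtain ⟨k, -, hxk⟩ := mem_biUnion.1 (hXcover ▸ hAsub i p hx.1 : x ∈ univ.biUnion X)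
    exact ⟨k, ⟨x, mem_inter.2 ⟨hAS i p hx.1, hxk⟩⟩, p, q, hpq, (hpart i x p).2 hx.1,
      (hpart j x q).2 hx.2⟩
  have hcard : ∀ i k r, #{x : ↥(S ∩ X k) | L i k x = some r} = #(A i r ∩ X k) := by
    intro i k r
    rw [← card_map (Embedding.subtype _)]
    congr 1
    ext x
    simpa [L, hpart] using fun hx _ => hAS i r hx
  simpa only [hcard, Fintype.card_coe] using sum_inv_prod_multinomial_le hL

/-- **Theorem (skew Bollobás systems over a partitioned ground set).**
Let `d ≥ 2` and suppose `[n]` is the disjoint union of sets `X_1, …, X_e`.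
Let `{(A_i^{(1)}, …, A_i^{(d)})}_{1 ≤ i ≤ m}` be a skew Bollobás system of
`d`-partitions of `[n]`, `S = ⋃_i ⋃_r A_i^{(r)}` and `s_k = |S ∩ X_k|`. Then
`∑_i (∏_k multinomial(|A_i^{(1)} ∩ X_k|, …, |A_i^{(d)} ∩ X_k|))⁻¹
  ≤ ∏_k C(s_k + d - 1, d - 1)`. -/
theorem skew_bollobas_partitioned (n d e m : ℕ) (hd : 2 ≤ d)
    (X : Fin e → Finset ℕ)
    (hXdisj : ∀ k l : Fin e, k ≠ l → Disjoint (X k) (X l))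
    (hXcover : Finset.univ.biUnion X = Finset.Icc 1 n)
    (A : Fin m → Fin d → Finset ℕ)
    (hAsub : ∀ i r, A i r ⊆ Finset.Icc 1 n)
    (hAdisj : ∀ i, ∀ p q : Fin d, p ≠ q → Disjoint (A i p) (A i q))
    (hskew : ∀ i j : Fin m, i < j →
      ∃ p q : Fin d, p < q ∧ ((A i p) ∩ (A j q)).Nonempty) :
    ∑ i : Fin m, (∏ k : Fin e,
        ((Nat.multinomial Finset.univ
          fun r : Fin d => ((A i r) ∩ X k).card : ℕ) : ℚ))⁻¹
      ≤ ∏ k : Fin e,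
          (((((Finset.univ.biUnion fun i : Fin m =>
                Finset.univ.biUnion fun r : Fin d => A i r) ∩ X k).card
              + d - 1).choose (d - 1) : ℕ) : ℚ) :=
  skew_bollobas_partitioned_general n d e m hd X hXcover A hAsub hAdisj hskew
end

section
/- Let d ≥ 2 and suppose [n] is the disjoint union of nonempty sets X_1,…,X_e. Then there exists a skew Bollobás system D = {(A_i^{(1)},…,A_i^{(d)})}_{1≤i≤m} of d-partitions of [n] with ⋃_{i=1}^m ⋃_{r=1}^d A_i^{(r)} = [n] such that ∑_{i=1}^m ( ∏_{k=1}^e binom(∑_{r=1}^d |A_i^{(r)} ∩ X_k|; |A_i^{(1)} ∩ X_k|,…,|A_i^{(d)} ∩ X_k|) )^{-1} = ∏_{k=1}^e binom(|X_k| + d - 1, d - 1); that is, the upper bound in the skew Bollobás inequality for partitioned ground sets is tight. -/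
/-!
Enumerate all colourings `c : [n] → [d]` in increasing lexicographic order and take their colour
classes as the `d`-partitions: for `i < j` the first point where the two colourings differ lies in
a class of `c_i` whose colour is smaller than that of the class of `c_j` containing it.

Colouring `[n]` is the same as colouring each block `X_k` independently, so the sum factorises
over the blocks. For one block of size `N`, `∑_c 1 / multinomial (colour class sizes of c)` is
`multichoose d N` by induction on `N`: summing over the colour `r` of a new point,
`∑_r 1 / multinomial (a + e_r) = (|a| + d) / (|a| + 1) · 1 / multinomial a`,
and `(N + d) / (N + 1)` is exactly the ratio `multichoose d (N + 1) / multichoose d N`.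
-/

open Finset
open Function
open scoped Nat

namespace Nat

theorem multinomial_add_single_mul {α : Type*} [DecidableEq α] {s : Finset α} {a : α}
    (ha : a ∈ s) (f : α → ℕ) :
    multinomial s (f + Pi.single a 1) * (f a + 1) = (∑ i ∈ s, f i + 1) * multinomial s f := by
  have hsum : ∑ i ∈ s, (f + Pi.single a 1 : α → ℕ) i = ∑ i ∈ s, f i + 1 := by
    simp [sum_add_distrib, ha]
  have hprod : ∏ i ∈ s, ((f + Pi.single a 1 : α → ℕ) i)! = (f a + 1) * ∏ i ∈ s, (f i)! := by
    rw [← mul_prod_erase s _ ha, ← mul_prod_erase s _ ha]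
    have hoff : ∏ i ∈ s.erase a, ((f + Pi.single a 1 : α → ℕ) i)! = ∏ i ∈ s.erase a, (f i)! :=
      prod_congr rfl fun i hi => by simp [ne_of_mem_erase hi]
    rw [hoff]
    simp [factorial_succ, mul_assoc]
  have hspec := multinomial_spec s (f + Pi.single a 1)
  rw [hprod, hsum, factorial_succ, ← multinomial_spec s f] at hspec
  apply Nat.eq_of_mul_eq_mul_left (prod_pos fun i _ => factorial_pos (f i))
  linarith

theorem succ_mul_multichoose_succ (n k : ℕ) :
    (k + 1) * multichoose n (k + 1) = (n + k) * multichoose n k := by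
  rcases n with _ | n
  · cases k <;> simp [multichoose_zero_succ]
  · rw [multichoose_eq, multichoose_eq, show n + 1 + (k + 1) - 1 = n + k + 1 by omega,
      show n + 1 + k - 1 = n + k by omega, mul_comm, ← add_one_mul_choose_eq]
    ring

theorem multichoose_eq_choose_sub_one {n : ℕ} (hn : 0 < n) (k : ℕ) :
    multichoose n k = (k + n - 1).choose (n - 1) := by
  rw [multichoose_eq, add_comm]
  exact choose_symm_of_eq_add (by omega)

end Nat

theorem sum_inv_multinomial_add_single {β : Type*} [Fintype β] [DecidableEq β] (f : β → ℕ) :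
    ∑ r, ((Nat.multinomial univ (f + Pi.single r 1) : ℕ) : ℚ)⁻¹
      = (∑ r, f r + Fintype.card β) / ((∑ r, f r + 1) * Nat.multinomial univ f) := by
  have hterm (r : β) : ((Nat.multinomial univ (f + Pi.single r 1) : ℕ) : ℚ)⁻¹
      = (f r + 1) / ((∑ r, f r + 1) * Nat.multinomial univ f) := by
    have h : ((Nat.multinomial univ (f + Pi.single r 1) : ℕ) : ℚ) * (f r + 1)
        = (∑ r, f r + 1) * Nat.multinomial univ f := by
      exact_mod_cast Nat.multinomial_add_single_mul (mem_univ r) f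
    have hM : ((Nat.multinomial univ (f + Pi.single r 1) : ℕ) : ℚ) ≠ 0 := by
      exact_mod_cast (Nat.multinomial_pos _ _).ne'
    rw [← h]
    field_simp
  simp only [hterm, ← sum_div, sum_add_distrib, sum_const, card_univ, nsmul_one]
  push_cast
  ring

theorem sum_inv_multinomial_card_fiber_fin (β : Type*) [Fintype β] [DecidableEq β] (N : ℕ) :
    ∑ c : Fin N → β, ((Nat.multinomial univ fun r => #{t | c t = r} : ℕ) : ℚ)⁻¹
      = Nat.multichoose (Fintype.card β) N := by
  induction N with
  | zero => simp [Nat.multinomial]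
  | succ N ih =>
    have hcons (r : β) (c : Fin N → β) :
        (fun s => #{t | (Fin.cons r c : Fin (N + 1) → β) t = s})
          = (fun s => #{t | c t = s}) + Pi.single r 1 := by
      ext s
      simp only [card_filter, Fin.sum_univ_succ, Fin.cons_zero, Fin.cons_succ, Pi.add_apply,
        Pi.single_apply, eq_comm (a := r)]
      ring
    have hsum (c : Fin N → β) : ∑ s, #{t | c t = s} = N := by
      rw [← card_eq_sum_card_fiberwise (fun _ _ => mem_univ _), card_univ, Fintype.card_fin]
    rw [← (Fin.consEquiv fun _ => β).sum_comp, Fintype.sum_prod_type, sum_comm]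
    simp only [Fin.consEquiv_apply, hcons, sum_inv_multinomial_add_single, hsum, div_eq_mul_inv,
      mul_inv, ← mul_assoc, ← mul_sum, ih]
    have h : ((N + 1 : ℕ) : ℚ) * Nat.multichoose (Fintype.card β) (N + 1)
        = ((Fintype.card β + N : ℕ) : ℚ) * Nat.multichoose (Fintype.card β) N := by
      exact_mod_cast Nat.succ_mul_multichoose_succ (Fintype.card β) N
    push_cast at h
    field_simp
    linarith

theorem sum_inv_multinomial_card_fiber (α β : Type*) [Fintype α] [DecidableEq α] [Fintype β]
    [DecidableEq β] :
    ∑ c : α → β, ((Nat.multinomial univ fun r => #{x | c x = r} : ℕ) : ℚ)⁻¹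
      = Nat.multichoose (Fintype.card β) (Fintype.card α) := by
  let e := Fintype.equivFin α
  rw [← sum_inv_multinomial_card_fiber_fin]
  refine Fintype.sum_equiv (e.arrowCongr (Equiv.refl β)) _ _ fun c => ?_
  congr! 4 with r
  exact card_equiv e (by simp)

theorem sum_prod_inv_multinomial_card_fiber_block {ι κ β : Type*} [Fintype ι] [Fintype κ]
    [Fintype β] [DecidableEq ι] [DecidableEq κ] [DecidableEq β] (blk : ι → κ) :
    ∑ c : ι → β, ∏ k, ((Nat.multinomial univ fun r => #{x | c x = r ∧ blk x = k} : ℕ) : ℚ)⁻¹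
      = ∏ k, (Nat.multichoose (Fintype.card β) #{x | blk x = k} : ℚ) := by
  let e : (ι → β) ≃ ∀ k, {x // blk x = k} → β :=
    { toFun c _ x := c x
      invFun C x := C (blk x) ⟨x, rfl⟩
      left_inv _ := rfl
      right_inv C := by ext k ⟨x, rfl⟩; rfl }
  have hblock (k : κ) : #{x | blk x = k} = Fintype.card {x // blk x = k} :=
    (Fintype.card_subtype _).symm
  simp_rw [hblock, ← sum_inv_multinomial_card_fiber, Fintype.prod_sum]
  refine Fintype.sum_equiv e _ _ fun c => prod_congr rfl fun k _ => ?_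
  congr! 4 with r
  rw [← card_map (Embedding.subtype _)]
  congr 1
  ext x
  simp [e]

section ColorClass

variable {α β : Type*} [DecidableEq β] {s : Finset α}

def colorClass (c : s → β) (r : β) : Finset α :=
  ({x | c x = r} : Finset s).map (Embedding.subtype _)

theorem mem_colorClass {c : s → β} {r : β} {a : α} :
    a ∈ colorClass c r ↔ ∃ h : a ∈ s, c ⟨a, h⟩ = r := by
  simp [colorClass]

theorem coe_mem_colorClass (c : s → β) (x : s) : ↑x ∈ colorClass c (c x) :=
  mem_colorClass.2 ⟨x.2, rfl⟩

theorem colorClass_subset (c : s → β) (r : β) : colorClass c r ⊆ s :=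
  fun _ ha => (mem_colorClass.1 ha).1

theorem disjoint_colorClass (c : s → β) {r r' : β} (h : r ≠ r') :
    Disjoint (colorClass c r) (colorClass c r') := by
  rw [disjoint_left]
  rintro a ha ha'
  obtain ⟨_, hr⟩ := mem_colorClass.1 ha
  obtain ⟨_, hr'⟩ := mem_colorClass.1 ha'
  exact h (hr.symm.trans hr')

theorem biUnion_colorClass [DecidableEq α] [Fintype β] (c : s → β) :
    univ.biUnion (colorClass c) = s := by
  ext a
  simp only [mem_biUnion, mem_univ, true_and, mem_colorClass]
  exact ⟨fun ⟨_, h, _⟩ => h, fun h => ⟨_, h, rfl⟩⟩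

theorem card_colorClass_inter [DecidableEq α] (c : s → β) (r : β) (t : Finset α) :
    #(colorClass c r ∩ t) = #{x | c x = r ∧ ↑x ∈ t} := by
  rw [← card_map (Embedding.subtype _)]
  congr 1
  ext a
  simp [colorClass]

end ColorClass

theorem card_filter_coe_mem {α : Type*} [DecidableEq α] {s t : Finset α} (h : t ⊆ s) :
    #{x : s | ↑x ∈ t} = #t := by
  rw [← card_map (Embedding.subtype _)]
  congr 1
  ext a
  simpa using fun ha => h ha

theorem exists_block_index {α κ : Type*} [DecidableEq α] [Fintype κ] {X : κ → Finset α}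
    (hdisj : Pairwise (Disjoint on X)) {s : Finset α} (hcover : univ.biUnion X = s) :
    ∃ blk : s → κ, ∀ x k, blk x = k ↔ ↑x ∈ X k := by
  have hmem (x : s) : ∃ k, ↑x ∈ X k := by
    simpa [← hcover] using x.2
  choose blk hblk using hmem
  refine ⟨blk, fun x k => ⟨fun h => h ▸ hblk x, fun hk => ?_⟩⟩
  by_contra hne
  exact disjoint_left.1 (hdisj hne) (hblk x) hk

theorem sum_prod_inv_multinomial_card_colorClass_inter {α κ β : Type*} [DecidableEq α]
    [Fintype κ] [DecidableEq κ] [Fintype β] [DecidableEq β] {X : κ → Finset α}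
    (hdisj : Pairwise (Disjoint on X)) {s : Finset α} (hcover : univ.biUnion X = s) :
    ∑ c : s → β, ∏ k, ((Nat.multinomial univ fun r => #(colorClass c r ∩ X k) : ℕ) : ℚ)⁻¹
      = ∏ k, (Nat.multichoose (Fintype.card β) #(X k) : ℚ) := by
  obtain ⟨blk, hblk⟩ := exists_block_index hdisj hcover
  have hX (k : κ) : #{x | blk x = k} = #(X k) := by
    simp_rw [hblk]
    exact card_filter_coe_mem (hcover ▸ subset_biUnion_of_mem X (mem_univ k))
  simp_rw [card_colorClass_inter, ← hblk, ← hX]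
  exact sum_prod_inv_multinomial_card_fiber_block blk

theorem skew_bollobas_partitioned_tight_general (n d e : ℕ) (hd : 2 ≤ d)
    (X : Fin e → Finset ℕ)
    (hXdisj : ∀ k l : Fin e, k ≠ l → Disjoint (X k) (X l))
    (hXcover : Finset.univ.biUnion X = Finset.Icc 1 n) :
    ∃ m : ℕ, ∃ A : Fin m → Fin d → Finset ℕ,
      (∀ i r, A i r ⊆ Finset.Icc 1 n) ∧
      (∀ i, ∀ p q : Fin d, p ≠ q → Disjoint (A i p) (A i q)) ∧
      (∀ i j : Fin m, i < j →
        ∃ p q : Fin d, p < q ∧ ((A i p) ∩ (A j q)).Nonempty) ∧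
      (Finset.univ.biUnion fun i : Fin m =>
        Finset.univ.biUnion fun r : Fin d => A i r) = Finset.Icc 1 n ∧
      ∑ i : Fin m, (∏ k : Fin e,
          ((Nat.multinomial Finset.univ
            fun r : Fin d => ((A i r) ∩ X k).card : ℕ) : ℚ))⁻¹
        = ∏ k : Fin e, ((((X k).card + d - 1).choose (d - 1) : ℕ) : ℚ) := by
  have : NeZero d := ⟨by omega⟩
  let σ := Fintype.orderIsoFinOfCardEq (Lex (Icc 1 n → Fin d)) rfl
  refine ⟨_, fun i => colorClass (ofLex (σ i)), fun i => colorClass_subset _,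
    fun i _ _ => disjoint_colorClass _, fun i j hij => ?_, ?_, ?_⟩
  · -- `<` on `Lex (ι → β)` unfolds to: equal below some `x`, and smaller at `x`.
    obtain ⟨x, -, hx⟩ := σ.strictMono hij
    exact ⟨_, _, hx, x, mem_inter.2 ⟨coe_mem_colorClass _ x, coe_mem_colorClass _ x⟩⟩
  · simp only [biUnion_colorClass]
    ext a
    simpa using fun _ _ => ⟨σ.symm (toLex 0), mem_univ _⟩
  · have hsum := sum_prod_inv_multinomial_card_colorClass_inter (β := Fin d) hXdisj hXcover
    rw [← (σ.toEquiv.trans ofLex).sum_comp] at hsum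
    simp_rw [← prod_inv_distrib]
    refine hsum.trans ?_
    simp [Nat.multichoose_eq_choose_sub_one (show 0 < d by omega)]

/-- **Theorem (tightness of the skew Bollobás bound over a partitioned ground set).**
If `[n]` is the disjoint union of nonempty sets `X_1, …, X_e` and `d ≥ 2`, then there
is a skew Bollobás system of `d`-partitions of `[n]` with support exactly `[n]`
achieving `∑_i (∏_k multinomial(…))⁻¹ = ∏_k C(|X_k| + d - 1, d - 1)`. -/
theorem skew_bollobas_partitioned_tight (n d e : ℕ) (hd : 2 ≤ d)
    (X : Fin e → Finset ℕ)
    (hXdisj : ∀ k l : Fin e, k ≠ l → Disjoint (X k) (X l))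
    (hXcover : Finset.univ.biUnion X = Finset.Icc 1 n)
    (hXne : ∀ k : Fin e, (X k).Nonempty) :
    ∃ m : ℕ, ∃ A : Fin m → Fin d → Finset ℕ,
      (∀ i r, A i r ⊆ Finset.Icc 1 n) ∧
      (∀ i, ∀ p q : Fin d, p ≠ q → Disjoint (A i p) (A i q)) ∧
      (∀ i j : Fin m, i < j →
        ∃ p q : Fin d, p < q ∧ ((A i p) ∩ (A j q)).Nonempty) ∧
      (Finset.univ.biUnion fun i : Fin m =>
        Finset.univ.biUnion fun r : Fin d => A i r) = Finset.Icc 1 n ∧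
      ∑ i : Fin m, (∏ k : Fin e,
          ((Nat.multinomial Finset.univ
            fun r : Fin d => ((A i r) ∩ X k).card : ℕ) : ℚ))⁻¹
        = ∏ k : Fin e, ((((X k).card + d - 1).choose (d - 1) : ℕ) : ℚ) :=
  skew_bollobas_partitioned_tight_general n d e hd X hXdisj hXcover
end

section
/- Let d ≥ 2 and let D = {(A_i^{(1)},…,A_i^{(d)})}_{1≤i≤m} be a skew Bollobás system of d-partitions of [n]. Then ∑_{i=1}^m binom(∑_{r=1}^d |A_i^{(r)}|; |A_i^{(1)}|,…,|A_i^{(d)}|)^{-1} ≤ binom(n + d - 1, d - 1). -/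
/-!
Count the arrangements of the `n` elements and `d - 1` bars in a row; there are
`n! * C(n + d - 1, d - 1)` of them. An arrangement fits a `d`-partition if every element of its
`r`-th part lies between the `(r - 1)`-st and the `r`-th bar; an element of `A_i^{(p)} ∩ A_j^{(q)}`
with `p ≠ q` shows that no arrangement fits two partitions of the system. So it suffices that at
least `n! / multinomial(|A^{(1)}|, …, |A^{(d)}|)` arrangements fit each partition. If the parts
cover `[n]` this is sorting within blocks. Otherwise, putting an uncovered element into each part
in turn splits the fitting arrangements into `d` classes, while the weights `∏ a_s! / a!` of the
enlarged partitions add up to `(a + d) / (a + 1) ≥ 1` times the weight of the original one.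
-/

open Finset Function
open scoped Nat

namespace SkewBollobas

theorem eq_of_monotone_of_map_univ_eq {n : ℕ} {β : Type*} [LinearOrder β] {f g : Fin n → β}
    (hf : Monotone f) (hg : Monotone g) (h : univ.val.map f = univ.val.map g) : f = g := by
  rw [Fin.univ_val_map, Fin.univ_val_map, Multiset.coe_eq_coe] at h
  exact List.ofFn_injective (h.eq_of_sortedLE hf.sortedLE_ofFn hg.sortedLE_ofFn)

theorem card_monotone_le_choose (n d : ℕ) :
    #{g : Fin n → Fin d | Monotone g} ≤ (d + n - 1).choose n := by
  have hsym := Sym.card_sym_eq_choose (α := Fin d) n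
  rw [Fintype.card_fin] at hsym
  rw [← hsym, ← card_univ]
  refine card_le_card_of_injOn (fun g => (⟨univ.val.map g, by simp⟩ : Sym (Fin d) n))
    (fun _ _ => mem_univ _) fun f hf g hg hfg => ?_
  simp only [coe_filter, mem_univ, true_and, Set.mem_ofPred_eq] at hf hg
  exact eq_of_monotone_of_map_univ_eq hf hg (congrArg Subtype.val hfg)

theorem prod_factorial_update_succ {ι : Type*} [Fintype ι] [DecidableEq ι] (c : ι → ℕ) (r : ι) :
    ∏ s, (update c r (c r + 1) s)! = (c r + 1) * ∏ s, (c s)! := by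
  rw [Fintype.prod_eq_mul_prod_compl r, Fintype.prod_eq_mul_prod_compl r (fun s => (c s)!),
    update_self, Nat.factorial_succ, mul_assoc]
  congr 2
  exact prod_congr rfl fun s hs => by rw [update_of_ne (by simpa using hs)]

theorem sum_update_succ {ι : Type*} [Fintype ι] [DecidableEq ι] (c : ι → ℕ) (r : ι) :
    ∑ s, update c r (c r + 1) s = ∑ s, c s + 1 := by
  rw [sum_update_of_mem (mem_univ r), ← add_sum_erase _ _ (mem_univ r), sdiff_singleton_eq_erase]
  ring

/-- The weight `∏ c! / (∑ c)!` of `c` is at most the sum of the weights of its increments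
`c + eᵣ`, because `∑ᵣ (c r + 1) = ∑ c + card ι ≥ ∑ c + 1`. -/
theorem mul_prod_factorial_le_of_update_succ {ι : Type*} [Fintype ι] [DecidableEq ι] [Nonempty ι]
    (c F : ι → ℕ) (M : ℕ)
    (h : ∀ r, M * ∏ s, (update c r (c r + 1) s)! ≤ F r * (∑ s, update c r (c r + 1) s)!) :
    M * ∏ s, (c s)! ≤ (∑ r, F r) * (∑ s, c s)! := by
  set P := ∏ s, (c s)!
  set a := ∑ s, c s
  have hsum : ∑ r, M * ((c r + 1) * P) ≤ (∑ r, F r) * (a + 1)! := by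
    rw [sum_mul]
    exact sum_le_sum fun r _ => by
      simpa only [prod_factorial_update_succ, sum_update_succ] using h r
  have hcount : a + 1 ≤ ∑ r, (c r + 1) := by
    rw [sum_add_distrib, sum_const, card_univ, smul_eq_mul, mul_one]
    have := Fintype.card_pos (α := ι)
    omega
  have hscaled : (a + 1) * (M * P) ≤ (a + 1) * ((∑ r, F r) * a !) := by
    calc (a + 1) * (M * P) ≤ (∑ r, (c r + 1)) * (M * P) := Nat.mul_le_mul_right _ hcount
      _ = ∑ r, M * ((c r + 1) * P) := by rw [sum_mul]; exact sum_congr rfl fun _ _ => by ring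
      _ ≤ (∑ r, F r) * (a + 1)! := hsum
      _ = (a + 1) * ((∑ r, F r) * a !) := by rw [Nat.factorial_succ]; ring
  exact Nat.le_of_mul_le_mul_left hscaled (Nat.succ_pos a)

variable {α : Type*} [DecidableEq α] {d : ℕ}

theorem subset_update_insert (B : Fin d → Finset α) (r s : Fin d) (x : α) :
    B s ⊆ update B r (insert x (B r)) s := by
  rcases eq_or_ne s r with rfl | hsr
  · simp
  · simp [hsr]

theorem pairwise_disjoint_update_insert {B : Fin d → Finset α} (hdisj : Pairwise (Disjoint on B))
    {x : α} (hx : ∀ r, x ∉ B r) (r : Fin d) :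
    Pairwise (Disjoint on update B r (insert x (B r))) := by
  intro p q hpq
  simp only [onFun]
  rcases eq_or_ne p r with rfl | hp
  · rw [update_self, update_of_ne hpq.symm, disjoint_insert_left]
    exact ⟨hx q, hdisj hpq⟩
  rcases eq_or_ne q r with rfl | hq
  · rw [update_self, update_of_ne hp, disjoint_insert_right]
    exact ⟨hx p, hdisj hpq⟩
  rw [update_of_ne hp, update_of_ne hq]
  exact hdisj hpq

theorem card_update_insert {B : Fin d → Finset α} {x : α} (hx : ∀ r, x ∉ B r) (r s : Fin d) :
    #(update B r (insert x (B r)) s) = update (fun s => #(B s)) r (#(B r) + 1) s := by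
  rcases eq_or_ne s r with rfl | hs
  · simp [hx s]
  · simp [hs]

theorem biUnion_update_insert (B : Fin d → Finset α) (x : α) (r : Fin d) :
    univ.biUnion (update B r (insert x (B r))) = insert x (univ.biUnion B) := by
  ext y
  simp only [mem_biUnion, mem_univ, true_and, mem_insert]
  constructor
  · rintro ⟨s, hs⟩
    rcases eq_or_ne s r with rfl | hsr
    · exact (by simpa using hs : y = x ∨ y ∈ B s).imp_right fun h => ⟨s, h⟩
    · exact Or.inr ⟨s, by simpa [hsr] using hs⟩
  · rintro (rfl | ⟨s, hs⟩)
    · exact ⟨r, by simp⟩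
    · exact ⟨s, subset_update_insert B r s x hs⟩

variable [Fintype α]

/-- Arrangements of the elements of `α` and `d - 1` indistinguishable bars in a row: `w.1 x` is
the position of `x` among the elements, and `w.2 k` the number of bars before the element in
position `k`, so that `w.2 (w.1 x)` is the block containing `x`. -/
def arrangements (α : Type*) [Fintype α] [DecidableEq α] (d : ℕ) :
    Finset ((α ≃ Fin (Fintype.card α)) × (Fin (Fintype.card α) → Fin d)) :=
  univ ×ˢ ({g | Monotone g} : Finset (Fin (Fintype.card α) → Fin d))

def fitting (B : Fin d → Finset α) :
    Finset ((α ≃ Fin (Fintype.card α)) × (Fin (Fintype.card α) → Fin d)) :=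
  {w ∈ arrangements α d | ∀ r, ∀ x ∈ B r, w.2 (w.1 x) = r}

theorem card_arrangements_le :
    #(arrangements α d) ≤ (Fintype.card α)! * (Fintype.card α + d - 1).choose (Fintype.card α) := by
  rw [arrangements, card_product, card_univ, Fintype.card_equiv (Fintype.equivFin α), add_comm]
  exact Nat.mul_le_mul_left _ (card_monotone_le_choose _ _)

theorem disjoint_fitting {B B' : Fin d → Finset α} {p q : Fin d} (hpq : p ≠ q) {x : α}
    (hx : x ∈ B p) (hx' : x ∈ B' q) : Disjoint (fitting B) (fitting B') := by
  refine disjoint_left.2 fun w hw hw' => hpq ?_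
  simp only [fitting, mem_filter] at hw hw'
  exact (hw.2 p x hx).symm.trans (hw'.2 q x hx')

theorem fitting_eq_biUnion_update_insert {B : Fin d → Finset α} {x : α} (hx : ∀ r, x ∉ B r) :
    fitting B = univ.biUnion fun r => fitting (update B r (insert x (B r))) := by
  ext w
  simp only [fitting, mem_biUnion, mem_filter, mem_univ, true_and]
  constructor
  · rintro ⟨hw, hfit⟩
    refine ⟨w.2 (w.1 x), hw, fun s y hy => ?_⟩
    rcases eq_or_ne s (w.2 (w.1 x)) with rfl | hs
    · rw [update_self, mem_insert] at hy
      rcases hy with rfl | hy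
      · rfl
      · exact hfit _ y hy
    · exact hfit s y (by simpa [hs] using hy)
  · rintro ⟨r, hw, hfit⟩
    exact ⟨hw, fun s y hy => hfit s y (subset_update_insert B r s x hy)⟩

theorem card_fitting_eq_sum_update_insert {B : Fin d → Finset α} {x : α} (hx : ∀ r, x ∉ B r) :
    #(fitting B) = ∑ r, #(fitting (update B r (insert x (B r)))) := by
  rw [fitting_eq_biUnion_update_insert hx, card_biUnion]
  intro r _ s _ hrs
  exact disjoint_fitting hrs (x := x) (by simp) (by simp)

/-- When the `B r` partition `α`, the arrangements fitting `B` include the sorting of the block map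
`β` followed by any of the `∏ r, #(B r)!` permutations preserving `β`. -/
theorem prod_factorial_le_card_fitting {B : Fin d → Finset α} (hdisj : Pairwise (Disjoint on B))
    (hcover : ∀ x, ∃ r, x ∈ B r) : ∏ r, (#(B r))! ≤ #(fitting B) := by
  choose β hβ using hcover
  have hβ_eq : ∀ x r, β x = r ↔ x ∈ B r := fun x r =>
    ⟨fun h => h ▸ hβ x, fun hx => by_contra fun h => disjoint_left.1 (hdisj h) (hβ x) hx⟩
  have hfibre : ∀ r, Fintype.card {x // β x = r} = #(B r) := fun r => by
    rw [Fintype.card_subtype]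
    congr 1
    ext x
    simp [hβ_eq]
  set e := Fintype.equivFin α
  set s := Tuple.sort (β ∘ e.symm)
  calc ∏ r, (#(B r))! = Fintype.card {τ : Equiv.Perm α // β ∘ τ = β} := by
        simp only [DomMulAct.stabilizer_card, hfibre]
    _ = #(univ : Finset {τ : Equiv.Perm α // β ∘ τ = β}) := card_univ.symm
    _ ≤ #(fitting B) := by
      refine card_le_card_of_injOn (fun τ => (τ.1.trans (e.trans s.symm), β ∘ e.symm ∘ s))
        (fun τ _ => ?_) fun τ _ τ' _ h => ?_
      · simp only [coe_filter, fitting, arrangements, mem_filter, mem_product, mem_univ,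
          true_and, Set.mem_ofPred_eq]
        refine ⟨Tuple.monotone_sort (β ∘ e.symm), fun r x hx => ?_⟩
        simpa [(hβ_eq x r).2 hx] using congrFun τ.2 x
      · exact Subtype.ext (Equiv.ext fun x =>
          (e.trans s.symm).injective (congrArg (fun w => w.1 x) h))

/-- Induction on the number of elements outside all the `B r`: an uncovered element splits the
fitting arrangements according to the block it lands in. -/
theorem factorial_mul_prod_factorial_le (hd : 0 < d) (B : Fin d → Finset α)
    (hdisj : Pairwise (Disjoint on B)) :
    (Fintype.card α)! * ∏ r, (#(B r))! ≤ #(fitting B) * (∑ r, #(B r))! := by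
  have : Nonempty (Fin d) := ⟨⟨0, hd⟩⟩
  induction hk : #(univ \ univ.biUnion B) generalizing B with
  | zero =>
    have hcover : univ.biUnion B = univ := univ_subset_iff.1 (sdiff_eq_empty_iff_subset.1
      (card_eq_zero.1 hk))
    have hsum : ∑ r, #(B r) = Fintype.card α := by
      rw [← card_biUnion fun p _ q _ hpq => hdisj hpq, hcover, card_univ]
    rw [hsum, mul_comm]
    refine Nat.mul_le_mul_right _ (prod_factorial_le_card_fitting hdisj fun x => ?_)
    simpa using hcover.ge (mem_univ x)
  | succ k ih =>
    obtain ⟨x, hx⟩ := card_pos.1 (by omega : 0 < #(univ \ univ.biUnion B))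
    have hx' : ∀ r, x ∉ B r := by simpa using hx
    rw [card_fitting_eq_sum_update_insert hx']
    refine mul_prod_factorial_le_of_update_succ _ _ _ fun r => ?_
    have h := ih (update B r (insert x (B r))) (pairwise_disjoint_update_insert hdisj hx' r)
      (by rw [biUnion_update_insert, sdiff_insert, card_erase_of_mem hx, hk, Nat.add_sub_cancel])
    simpa only [card_update_insert hx'] using h

theorem factorial_le_card_fitting_mul_multinomial (hd : 0 < d) (B : Fin d → Finset α)
    (hdisj : Pairwise (Disjoint on B)) :
    (Fintype.card α)! ≤ #(fitting B) * Nat.multinomial univ fun r => #(B r) := by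
  have h := factorial_mul_prod_factorial_le hd B hdisj
  rw [← Nat.multinomial_spec, mul_left_comm, ← mul_assoc] at h
  exact Nat.le_of_mul_le_mul_right (by linarith) (prod_pos fun r _ => Nat.factorial_pos _)

theorem sum_card_fitting_le {ι : Type*} [Fintype ι] [LinearOrder ι] (B : ι → Fin d → Finset α)
    (hcross : ∀ i j, i < j → ∃ p q, p ≠ q ∧ (B i p ∩ B j q).Nonempty) :
    ∑ i, #(fitting (B i)) ≤
      (Fintype.card α)! * (Fintype.card α + d - 1).choose (Fintype.card α) := by
  have hdisj : ∀ i j, i < j → Disjoint (fitting (B i)) (fitting (B j)) := fun i j hij => by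
    obtain ⟨p, q, hpq, x, hx⟩ := hcross i j hij
    exact disjoint_fitting hpq (mem_inter.1 hx).1 (mem_inter.1 hx).2
  rw [← card_biUnion fun i _ j _ hij => hij.lt_or_gt.elim (hdisj i j) fun h => (hdisj j i h).symm]
  exact (card_le_card (biUnion_subset.2 fun i _ => filter_subset _ _)).trans card_arrangements_le

theorem sum_inv_multinomial_le_choose {ι : Type*} [Fintype ι] [LinearOrder ι] (hd : 0 < d)
    (B : ι → Fin d → Finset α) (hdisj : ∀ i, Pairwise (Disjoint on B i))
    (hcross : ∀ i j, i < j → ∃ p q, p ≠ q ∧ (B i p ∩ B j q).Nonempty) :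
    ∑ i, ((Nat.multinomial univ fun r => #(B i r) : ℕ) : ℚ)⁻¹ ≤
      (Fintype.card α + d - 1).choose (d - 1) := by
  set N := Fintype.card α
  have hN : (0 : ℚ) < N ! := by positivity
  refine le_of_mul_le_mul_left ?_ hN
  calc (N ! : ℚ) * ∑ i, ((Nat.multinomial univ fun r => #(B i r) : ℕ) : ℚ)⁻¹
      = ∑ i, (N ! : ℚ) / (Nat.multinomial univ fun r => #(B i r) : ℕ) := by
        simp only [mul_sum, div_eq_mul_inv]
    _ ≤ ∑ i, (#(fitting (B i)) : ℚ) := sum_le_sum fun i _ => by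
        rw [div_le_iff₀ (by exact_mod_cast Nat.multinomial_pos _ _)]
        exact_mod_cast factorial_le_card_fitting_mul_multinomial hd (B i) (hdisj i)
    _ ≤ N ! * (N + d - 1).choose N := by exact_mod_cast sum_card_fitting_le B hcross
    _ = N ! * (N + d - 1).choose (d - 1) := by
        rw [Nat.choose_symm_of_eq_add (show N + d - 1 = N + (d - 1) by omega)]

end SkewBollobas

/-- **Theorem (Hegedüs–Frankl).** If `{(A_i^{(1)}, …, A_i^{(d)})}_{1 ≤ i ≤ m}` is a
skew Bollobás system of `d`-partitions of `[n]` with `d ≥ 2`, then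
`∑_i multinomial(|A_i^{(1)}|, …, |A_i^{(d)}|)⁻¹ ≤ C(n + d - 1, d - 1)`. -/
theorem skew_bollobas_weighted_bound (n d m : ℕ) (hd : 2 ≤ d)
    (A : Fin m → Fin d → Finset ℕ)
    (hAsub : ∀ i r, A i r ⊆ Finset.Icc 1 n)
    (hAdisj : ∀ i, ∀ p q : Fin d, p ≠ q → Disjoint (A i p) (A i q))
    (hskew : ∀ i j : Fin m, i < j →
      ∃ p q : Fin d, p < q ∧ ((A i p) ∩ (A j q)).Nonempty) :
    ∑ i : Fin m,
        ((Nat.multinomial Finset.univ fun r : Fin d => (A i r).card : ℕ) : ℚ)⁻¹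
      ≤ (((n + d - 1).choose (d - 1) : ℕ) : ℚ) := by
  let B : Fin m → Fin d → Finset (Icc 1 n) := fun i r => (A i r).subtype (· ∈ Icc 1 n)
  have hcard : ∀ i r, #(B i r) = #(A i r) := fun i r => by
    rw [card_subtype, filter_true_of_mem (hAsub i r)]
  have hdisj : ∀ i, Pairwise (Disjoint on B i) := fun i p q hpq =>
    disjoint_left.2 fun x hxp hxq =>
      disjoint_left.1 (hAdisj i p q hpq) (mem_subtype.1 hxp) (mem_subtype.1 hxq)
  have hcross : ∀ i j, i < j → ∃ p q, p ≠ q ∧ (B i p ∩ B j q).Nonempty := fun i j hij => by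
    obtain ⟨p, q, hpq, x, hx⟩ := hskew i j hij
    exact ⟨p, q, hpq.ne, ⟨x, hAsub i p (mem_inter.1 hx).1⟩, by simpa [B] using hx⟩
  simpa [hcard] using SkewBollobas.sum_inv_multinomial_le_choose (by omega) B hdisj hcross
end

section
/- Let D = {(A_i^{(1)}, A_i^{(2)}, A_i^{(3)})}_{1≤i≤m} be a Bollobás system of 3-partitions of [n]. Let S = ⋃_{i=1}^m ⋃_{r=1}^3 A_i^{(r)} and s = |S|. Then ∑_{i=1}^m binom(|A_i^{(1)}| + |A_i^{(2)}| + |A_i^{(3)}|; |A_i^{(1)}|, |A_i^{(2)}|, |A_i^{(3)}|)^{-1} ≤ ⌊s/2⌋ + 1. -/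
open Finset

variable {α : Type*} [DecidableEq α]

def rkIn {n : ℕ} (Q : Finset (Fin n)) (v : Fin n) : ℕ := (Q.filter (· < v)).card

lemma rkIn_lt {n : ℕ} {Q : Finset (Fin n)} {v : Fin n} (hv : v ∈ Q) : rkIn Q v < Q.card := by
  apply Finset.card_lt_card
  constructor
  · exact Finset.filter_subset _ _
  · intro hsub
    have := hsub hv
    simp [rkIn] at this

lemma rkIn_lt_rkIn {n : ℕ} {Q : Finset (Fin n)} {v w : Fin n} (hv : v ∈ Q) (hw : w ∈ Q)
    (hvw : v < w) : rkIn Q v < rkIn Q w := by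
  apply Finset.card_lt_card
  constructor
  · intro x hx
    simp only [rkIn, Finset.mem_filter] at hx ⊢
    exact ⟨hx.1, lt_trans hx.2 hvw⟩
  · intro hsub
    have hvmem : v ∈ Q.filter (· < w) := by simp [hv, hvw]
    have := hsub hvmem
    simp at this

lemma rkIn_injOn {n : ℕ} {Q : Finset (Fin n)} {v w : Fin n} (hv : v ∈ Q) (hw : w ∈ Q)
    (h : rkIn Q v = rkIn Q w) : v = w := by
  rcases lt_trichotomy v w with h1 | h1 | h1
  · exact absurd h (Nat.ne_of_lt (rkIn_lt_rkIn hv hw h1))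
  · exact h1
  · exact absurd h.symm (Nat.ne_of_lt (rkIn_lt_rkIn hw hv h1))

def Ord3 {n : ℕ} (B : Fin 3 → Finset α) (σ : α ↪ Fin n) : Prop :=
  ∀ p q : Fin 3, p < q → ∀ x ∈ B p, ∀ y ∈ B q, σ x < σ y

lemma key {n : ℕ} (B C : Fin 3 → Finset α) (σ : α ↪ Fin n)
    (hOB : Ord3 B σ) (hOC : Ord3 C σ)
    (h1 : ∃ p q : Fin 3, p < q ∧ (B p ∩ C q).Nonempty)
    (h2 : ∃ p q : Fin 3, p < q ∧ (C p ∩ B q).Nonempty) :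
    (∃ z w, z ∈ B 1 ∧ w ∈ B 1 ∧ z ∈ C 2 ∧ w ∈ C 0) ∨
    (∃ z w, z ∈ C 1 ∧ w ∈ C 1 ∧ z ∈ B 2 ∧ w ∈ B 0) := by
  obtain ⟨p, q, hpq, z, hz⟩ := h1
  obtain ⟨p', q', hpq', w, hw⟩ := h2
  rw [Finset.mem_inter] at hz hw
  obtain ⟨hz1, hz2⟩ := hz
  obtain ⟨hw1, hw2⟩ := hw
  fin_cases p <;> fin_cases q <;> fin_cases p' <;> fin_cases q' <;>
    first
      | exact absurd hpq (by decide)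
      | exact absurd hpq' (by decide)
      | exact absurd (hOC _ _ (by decide) w hw1 z hz2) (not_lt.2 (le_of_lt (hOB _ _ (by decide) z hz1 w hw2)))
      | exact Or.inl ⟨z, w, hz1, hw2, hz2, hw1⟩
      | exact Or.inr ⟨w, z, hw1, hz2, hw2, hz1⟩

lemma pointwise {n m : ℕ} (B : Fin m → Fin 3 → Finset α) (σ : α ↪ Fin n)
    (hd : ∀ i, ∀ p q : Fin 3, p ≠ q → Disjoint (B i p) (B i q))
    (hB : ∀ i j : Fin m, i ≠ j → ∃ p q : Fin 3, p < q ∧ (B i p ∩ B j q).Nonempty)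
    (I : Finset (Fin m)) (hI : ∀ i ∈ I, Ord3 (B i) σ) :
    I.card ≤ n / 2 + 1 := by
  classical
  set pos : α → ℕ := fun x => (σ x : ℕ) with hpos
  set K := I.filter (fun i => (B i 1).Nonempty) with hK
  have hKI : K ⊆ I := Finset.filter_subset _ _
  set mfun : Fin m → ℕ := fun i =>
    if h : (B i 1).Nonempty then ((B i 1).image pos).min' (h.image pos) else 0 with hmfun
  set Mfun : Fin m → ℕ := fun i =>
    if h : (B i 1).Nonempty then ((B i 1).image pos).max' (h.image pos) else 0 with hMfun
  have hm_le : ∀ i, ∀ x ∈ B i 1, mfun i ≤ pos x := by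
    intro i x hx
    have h : (B i 1).Nonempty := ⟨x, hx⟩
    simp only [hmfun]; rw [dif_pos h]
    exact Finset.min'_le _ _ (Finset.mem_image_of_mem pos hx)
  have hM_ge : ∀ i, ∀ x ∈ B i 1, pos x ≤ Mfun i := by
    intro i x hx
    have h : (B i 1).Nonempty := ⟨x, hx⟩
    simp only [hMfun]; rw [dif_pos h]
    exact Finset.le_max' _ _ (Finset.mem_image_of_mem pos hx)
  have hm_mem : ∀ i, (B i 1).Nonempty → ∃ x ∈ B i 1, pos x = mfun i := by
    intro i h
    simp only [hmfun]; rw [dif_pos h]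
    have := Finset.min'_mem ((B i 1).image pos) (h.image pos)
    rw [Finset.mem_image] at this
    obtain ⟨x, hx, hxe⟩ := this
    exact ⟨x, hx, hxe⟩
  have hM_mem : ∀ i, (B i 1).Nonempty → ∃ x ∈ B i 1, pos x = Mfun i := by
    intro i h
    simp only [hMfun]; rw [dif_pos h]
    have := Finset.max'_mem ((B i 1).image pos) (h.image pos)
    rw [Finset.mem_image] at this
    obtain ⟨x, hx, hxe⟩ := this
    exact ⟨x, hx, hxe⟩
  have hposlt : ∀ x y : α, σ x < σ y → pos x < pos y := fun x y h => h
  have hconf : ∀ i ∈ I, ∀ j ∈ I, (B j 1).Nonempty →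
      (∃ z w, z ∈ B i 1 ∧ w ∈ B i 1 ∧ z ∈ B j 2 ∧ w ∈ B j 0) →
      mfun i < mfun j ∧ Mfun j < Mfun i := by
    rintro i hi j hj hjne ⟨z, w, hz1, hw1, hz2, hw2⟩
    obtain ⟨y0, hy0, hy0e⟩ := hm_mem j hjne
    obtain ⟨y1, hy1, hy1e⟩ := hM_mem j hjne
    have h1 : pos w < pos y0 := hposlt _ _ (hI j hj 0 1 (by decide) w hw2 y0 hy0)
    have h2 : pos y1 < pos z := hposlt _ _ (hI j hj 1 2 (by decide) y1 hy1 z hz2)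
    have h3 : mfun i ≤ pos w := hm_le i w hw1
    have h4 : pos z ≤ Mfun i := hM_ge i z hz1
    omega
  have hnest : ∀ i ∈ K, ∀ j ∈ K, i ≠ j →
      (mfun i < mfun j ∧ Mfun j < Mfun i) ∨ (mfun j < mfun i ∧ Mfun i < Mfun j) := by
    intro i hiK j hjK hij
    have hi := hKI hiK
    have hj := hKI hjK
    rcases key (B i) (B j) σ (hI i hi) (hI j hj) (hB i j hij) (hB j i hij.symm) with conf | conf
    · exact Or.inl (hconf i hi j hj (Finset.mem_filter.1 hjK).2 conf)
    · exact Or.inr (hconf j hj i hi (Finset.mem_filter.1 hiK).2 conf)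
  have hmM : ∀ i ∈ K, mfun i ≤ Mfun i := by
    intro i hiK
    obtain ⟨x, hx, hxe⟩ := hm_mem i (Finset.mem_filter.1 hiK).2
    have := hM_ge i x hx
    omega
  have hdiag : ∀ i ∈ K, ∀ j ∈ K, mfun i = Mfun j → i = j := by
    intro i hi j hj he
    by_contra hij
    have h1 := hmM i hi
    have h2 := hmM j hj
    rcases hnest i hi j hj hij with ⟨u1, u2⟩ | ⟨u1, u2⟩ <;> omega
  have hsing : ∀ i ∈ K, ∀ j ∈ K, mfun i = Mfun i → mfun j = Mfun j → i = j := by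
    intro i hi j hj he1 he2
    by_contra hij
    rcases hnest i hi j hj hij with ⟨u1, u2⟩ | ⟨u1, u2⟩ <;> omega
  set Im := K.image mfun with hIm
  set IM := K.image Mfun with hIM
  have hImcard : Im.card = K.card := by
    apply Finset.card_image_of_injOn
    intro i hi j hj he
    by_contra hij
    rcases hnest i hi j hj hij with ⟨u1, u2⟩ | ⟨u1, u2⟩ <;> omega
  have hIMcard : IM.card = K.card := by
    apply Finset.card_image_of_injOn
    intro i hi j hj he
    by_contra hij
    rcases hnest i hi j hj hij with ⟨u1, u2⟩ | ⟨u1, u2⟩ <;> omega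
  have hsubR : Im ∪ IM ⊆ Finset.range n := by
    intro v hv
    rw [Finset.mem_union] at hv
    rw [Finset.mem_range]
    rcases hv with hv | hv
    · rw [hIm, Finset.mem_image] at hv
      obtain ⟨i, hi, he⟩ := hv
      obtain ⟨x, hx, hxe⟩ := hm_mem i (Finset.mem_filter.1 hi).2
      rw [← he, ← hxe]
      exact (σ x).isLt
    · rw [hIM, Finset.mem_image] at hv
      obtain ⟨i, hi, he⟩ := hv
      obtain ⟨x, hx, hxe⟩ := hM_mem i (Finset.mem_filter.1 hi).2
      rw [← he, ← hxe]
      exact (σ x).isLt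
  have hcap : (Im ∩ IM).card ≤ 1 := by
    rw [Finset.card_le_one]
    intro v hv v' hv'
    rw [Finset.mem_inter, hIm, hIM, Finset.mem_image, Finset.mem_image] at hv hv'
    obtain ⟨⟨i, hi, hie⟩, ⟨j, hj, hje⟩⟩ := hv
    obtain ⟨⟨i', hi', hie'⟩, ⟨j', hj', hje'⟩⟩ := hv'
    have h1 : i = j := hdiag i hi j hj (by omega)
    have h2 : i' = j' := hdiag i' hi' j' hj' (by omega)
    subst h1; subst h2
    have h3 : i = i' := hsing i hi i' hi' (by omega) (by omega)
    rw [h3] at hie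
    omega
  have hunion := Finset.card_union_add_card_inter Im IM
  have hRn : (Im ∪ IM).card ≤ n := (Finset.card_le_card hsubR).trans (by simp)
  have h2k : 2 * K.card ≤ n + 1 := by omega
  have hKc1 : (I \ K).card ≤ 1 := by
    rw [Finset.card_le_one]
    intro j hj j' hj'
    by_contra hjj
    rw [Finset.mem_sdiff, hK, Finset.mem_filter] at hj hj'
    have hje : ¬(B j 1).Nonempty := fun h => hj.2 ⟨hj.1, h⟩
    have hje' : ¬(B j' 1).Nonempty := fun h => hj'.2 ⟨hj'.1, h⟩
    rcases key (B j) (B j') σ (hI j hj.1) (hI j' hj'.1) (hB j j' hjj) (hB j' j (Ne.symm hjj))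
      with ⟨z, w, hz1, _⟩ | ⟨z, w, hz1, _⟩
    · exact hje ⟨z, hz1⟩
    · exact hje' ⟨z, hz1⟩
  have hcardsplit : (I \ K).card + K.card = I.card := Finset.card_sdiff_add_card_eq_card hKI
  rcases Finset.eq_empty_or_nonempty (I \ K) with hemp | ⟨j0, hj0⟩
  · rw [hemp] at hcardsplit
    simp at hcardsplit
    omega
  · rw [Finset.mem_sdiff, hK, Finset.mem_filter] at hj0
    have hj0I : j0 ∈ I := hj0.1
    have hj0e : ¬(B j0 1).Nonempty := fun h => hj0.2 ⟨hj0.1, h⟩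
    have hstrict : ∀ i ∈ K, mfun i < Mfun i := by
      intro i hiK
      have hiI := hKI hiK
      have hij0 : i ≠ j0 := by
        intro h
        exact hj0e (h ▸ (Finset.mem_filter.1 hiK).2)
      rcases key (B i) (B j0) σ (hI i hiI) (hI j0 hj0I) (hB i j0 hij0) (hB j0 i hij0.symm)
        with ⟨z, w, hz1, hw1, hz2, hw2⟩ | ⟨z, w, hz1, _⟩
      · have hzw : z ≠ w := by
          intro h
          exact (Finset.disjoint_left.1 (hd j0 0 2 (by decide))) hw2 (h ▸ hz2)
        have hpzw : pos z ≠ pos w := fun h => hzw (σ.injective (Fin.val_injective h))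
        have := hm_le i z hz1
        have := hm_le i w hw1
        have := hM_ge i z hz1
        have := hM_ge i w hw1
        omega
      · exact absurd ⟨z, hz1⟩ hj0e
    have hcape : (Im ∩ IM).card = 0 := by
      rw [Finset.card_eq_zero, Finset.eq_empty_iff_forall_notMem]
      intro v hv
      rw [Finset.mem_inter, hIm, hIM, Finset.mem_image, Finset.mem_image] at hv
      obtain ⟨⟨i, hi, hie⟩, ⟨j, hj, hje⟩⟩ := hv
      have h1 : i = j := hdiag i hi j hj (by omega)
      subst h1
      exact absurd (by omega : mfun i < Mfun i → False) (fun h => h (hstrict i hi))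
    omega



section BollAux
variable {α : Type*} [DecidableEq α]

def bU (B : Fin 3 → Finset α) : Finset α := B 0 ∪ B 1 ∪ B 2

def img (B : Fin 3 → Finset α) {n : ℕ} (σ : α ↪ Fin n) (r : Fin 3) : Finset (Fin n) :=
  (B r).image σ

def pset (B : Fin 3 → Finset α) {n : ℕ} (σ : α ↪ Fin n) : Finset (Fin n) :=
  (bU B).image σ

lemma pset_card (B : Fin 3 → Finset α) {n : ℕ} (σ : α ↪ Fin n) :
    (pset B σ).card = (bU B).card :=
  Finset.card_image_of_injective _ σ.injective

def kap (B : Fin 3 → Finset α) {n : ℕ} (σ : α ↪ Fin n) : Fin (bU B).card ↪o Fin n :=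
  (pset B σ).orderEmbOfFin (pset_card B σ)

def idx (B : Fin 3 → Finset α) {n : ℕ} (σ : α ↪ Fin n) (x : α) : ℕ :=
  if x ∈ B 0 then rkIn (img B σ 0) (σ x)
  else if x ∈ B 1 then (B 0).card + rkIn (img B σ 1) (σ x)
  else (B 0).card + (B 1).card + rkIn (img B σ 2) (σ x)

def gfun (B : Fin 3 → Finset α) {n : ℕ} (σ : α ↪ Fin n) (x : α) : Fin n :=
  if h : x ∈ bU B ∧ idx B σ x < (bU B).card then kap B σ ⟨idx B σ x, h.2⟩ else σ x

def codeX (B : Fin 3 → Finset α) {n : ℕ} (σ : α ↪ Fin n) : Finset (Fin (bU B).card) :=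
  Finset.univ.filter (fun k => kap B σ k ∈ img B σ 0)

def codeY (B : Fin 3 → Finset α) {n : ℕ} (σ : α ↪ Fin n) : Finset (Fin (bU B).card) :=
  Finset.univ.filter (fun k => kap B σ k ∈ img B σ 1)

end BollAux

open Classical in
theorem count_ord [Fintype α] (B : Fin 3 → Finset α)
    (hd : ∀ p q : Fin 3, p ≠ q → Disjoint (B p) (B q)) :
    Nat.factorial (Fintype.card α) ≤ Nat.multinomial Finset.univ (fun r => (B r).card) *
      Fintype.card {σ : α ↪ Fin (Fintype.card α) // Ord3 B σ} := by
  classical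
  set n := Fintype.card α with hn
  set a := (B 0).card with ha
  set b := (B 1).card with hb
  set c := (B 2).card with hc
  set U := bU B with hU
  set u := U.card with hu
  have hd01 : Disjoint (B 0) (B 1) := hd 0 1 (by decide)
  have hd02 : Disjoint (B 0) (B 2) := hd 0 2 (by decide)
  have hd12 : Disjoint (B 1) (B 2) := hd 1 2 (by decide)
  have huabc : u = a + b + c := by
    rw [hu, hU, bU, Finset.card_union_of_disjoint, Finset.card_union_of_disjoint hd01]
    exact Finset.disjoint_union_left.2 ⟨hd02, hd12⟩
  have hmult : Nat.multinomial Finset.univ (fun r : Fin 3 => (B r).card)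
      = u.choose a * (u - a).choose b := by
    have huniv : (Finset.univ : Finset (Fin 3)) = insert 0 (insert 1 {2}) := by decide
    rw [huniv, Nat.multinomial_insert (by decide), Nat.multinomial_insert (by decide),
      Nat.multinomial_singleton]
    simp only [Finset.sum_insert (by decide : (1:Fin 3) ∉ ({2} : Finset (Fin 3))),
      Finset.sum_singleton]
    have h1 : (B 0).card + ((B 1).card + (B 2).card) = u := by omega
    have h2 : (B 1).card + (B 2).card = u - a := by omega
    rw [h1, h2]
    ring
  set D : Finset ((_ : Finset (Fin u)) × Finset (Fin u)) :=
    ((Finset.univ : Finset (Fin u)).powersetCard a).sigma (fun X : Finset (Fin u) => Xᶜ.powersetCard b) with hD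
  have hDcard : D.card = u.choose a * (u - a).choose b := by
    rw [hD, Finset.card_sigma]
    have hsum : ∀ X ∈ (Finset.univ : Finset (Fin u)).powersetCard a, (Xᶜ.powersetCard b).card = (u - a).choose b := by
      intro X hX
      rw [Finset.mem_powersetCard] at hX
      rw [Finset.card_powersetCard, Finset.card_compl, hX.2]
      congr 1
      simp [Fintype.card_fin]
    rw [Finset.sum_congr rfl hsum, Finset.sum_const, Finset.card_powersetCard]
    simp [Fintype.card_fin, mul_comm]
  -- basic facts
  have hUmem : ∀ {r : Fin 3} {x : α}, x ∈ B r → x ∈ bU B := by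
    intro r x hx
    fin_cases r
    · exact Finset.mem_union_left _ (Finset.mem_union_left _ hx)
    · exact Finset.mem_union_left _ (Finset.mem_union_right _ hx)
    · exact Finset.mem_union_right _ hx
  have hcase : ∀ x ∈ bU B, x ∈ B 0 ∨ (x ∉ B 0 ∧ x ∈ B 1) ∨ (x ∉ B 0 ∧ x ∉ B 1 ∧ x ∈ B 2) := by
    intro x hx
    rw [bU, Finset.mem_union, Finset.mem_union] at hx
    by_cases h0 : x ∈ B 0
    · exact Or.inl h0
    by_cases h1 : x ∈ B 1
    · exact Or.inr (Or.inl ⟨h0, h1⟩)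
    · tauto
  have himgcard : ∀ (σ : α ↪ Fin n) (r : Fin 3), (img B σ r).card = (B r).card :=
    fun σ r => Finset.card_image_of_injective _ σ.injective
  have himgsub : ∀ (σ : α ↪ Fin n) (r : Fin 3), img B σ r ⊆ pset B σ := by
    intro σ r v hv
    rw [img, Finset.mem_image] at hv
    obtain ⟨x, hx, he⟩ := hv
    exact he ▸ Finset.mem_image_of_mem σ (hUmem hx)
  have hpset_eq : ∀ σ : α ↪ Fin n, pset B σ = img B σ 0 ∪ img B σ 1 ∪ img B σ 2 := by
    intro σ
    rw [pset, bU, Finset.image_union, Finset.image_union]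
    rfl
  have himgdisj : ∀ (σ : α ↪ Fin n) (r r' : Fin 3), r ≠ r' →
      Disjoint (img B σ r) (img B σ r') := by
    intro σ r r' hrr
    rw [img, img]
    exact Finset.disjoint_image σ.injective |>.2 (hd r r' hrr)
  have hkapmem : ∀ (σ : α ↪ Fin n) (k : Fin u), kap B σ k ∈ pset B σ :=
    fun σ k => Finset.orderEmbOfFin_mem _ _ k
  have hkapsurj : ∀ (σ : α ↪ Fin n) (v : Fin n), v ∈ pset B σ → ∃ k, kap B σ k = v := by
    intro σ v hv
    have := Finset.range_orderEmbOfFin (pset B σ) (pset_card B σ)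
    rw [Set.ext_iff] at this
    have h2 := (this v).2 (by exact_mod_cast hv)
    exact h2
  have hmemimg : ∀ (σ : α ↪ Fin n) (r : Fin 3) (x : α), x ∈ B r → σ x ∈ img B σ r :=
    fun σ r x hx => Finset.mem_image_of_mem σ hx
  have hnotpset : ∀ (σ : α ↪ Fin n) (x : α), x ∉ bU B → σ x ∉ pset B σ := by
    intro σ x hx hmem
    rw [pset, Finset.mem_image] at hmem
    obtain ⟨y, hy, he⟩ := hmem
    exact hx (σ.injective he ▸ hy)
  -- idx values and bounds
  have hidx0 : ∀ (σ : α ↪ Fin n) (x : α), x ∈ B 0 →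
      idx B σ x = rkIn (img B σ 0) (σ x) ∧ idx B σ x < a := by
    intro σ x hx
    have h := rkIn_lt (hmemimg σ 0 x hx)
    rw [himgcard σ 0] at h
    rw [idx, if_pos hx]
    exact ⟨rfl, h⟩
  have hidx1 : ∀ (σ : α ↪ Fin n) (x : α), x ∉ B 0 → x ∈ B 1 →
      idx B σ x = a + rkIn (img B σ 1) (σ x) ∧ idx B σ x < a + b ∧ a ≤ idx B σ x := by
    intro σ x hx0 hx
    have h := rkIn_lt (hmemimg σ 1 x hx)
    rw [himgcard σ 1] at h
    rw [idx, if_neg hx0, if_pos hx]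
    exact ⟨rfl, by omega, by omega⟩
  have hidx2 : ∀ (σ : α ↪ Fin n) (x : α), x ∉ B 0 → x ∉ B 1 →  x ∈ B 2 →
      idx B σ x = a + b + rkIn (img B σ 2) (σ x) ∧ idx B σ x < a + b + c ∧
        a + b ≤ idx B σ x := by
    intro σ x hx0 hx1 hx
    have h := rkIn_lt (hmemimg σ 2 x hx)
    rw [himgcard σ 2] at h
    rw [idx, if_neg hx0, if_neg hx1]
    exact ⟨rfl, by omega, by omega⟩
  have hidxlt : ∀ (σ : α ↪ Fin n), ∀ x ∈ bU B, idx B σ x < u := by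
    intro σ x hx
    rcases hcase x hx with h | ⟨h0, h⟩ | ⟨h0, h1, h⟩
    · have := (hidx0 σ x h).2; omega
    · have := (hidx1 σ x h0 h).2.1; omega
    · have := (hidx2 σ x h0 h1 h).2.1; omega
  have hg_in : ∀ (σ : α ↪ Fin n), ∀ x (hx : x ∈ bU B),
      gfun B σ x = kap B σ ⟨idx B σ x, hidxlt σ x hx⟩ := by
    intro σ x hx
    rw [gfun, dif_pos ⟨hx, hidxlt σ x hx⟩]
  have hg_out : ∀ (σ : α ↪ Fin n), ∀ x, x ∉ bU B → gfun B σ x = σ x := by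
    intro σ x hx
    rw [gfun, dif_neg (fun h => hx h.1)]
  have hidxinj : ∀ (σ : α ↪ Fin n), ∀ x ∈ bU B, ∀ y ∈ bU B,
      idx B σ x = idx B σ y → x = y := by
    intro σ x hx y hy he
    have hsame : ∀ r : Fin 3, x ∈ B r → y ∈ B r →
        rkIn (img B σ r) (σ x) = rkIn (img B σ r) (σ y) → x = y := by
      intro r hxr hyr hrk
      exact σ.injective (rkIn_injOn (hmemimg σ r x hxr) (hmemimg σ r y hyr) hrk)
    rcases hcase x hx with h | ⟨h0, h⟩ | ⟨h0, h1, h⟩ <;>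
      rcases hcase y hy with h' | ⟨h0', h'⟩ | ⟨h0', h1', h'⟩
    · have e1 := hidx0 σ x h; have e2 := hidx0 σ y h'
      exact hsame 0 h h' (by omega)
    · have e1 := hidx0 σ x h; have e2 := hidx1 σ y h0' h'; omega
    · have e1 := hidx0 σ x h; have e2 := hidx2 σ y h0' h1' h'; omega
    · have e1 := hidx1 σ x h0 h; have e2 := hidx0 σ y h'; omega
    · have e1 := hidx1 σ x h0 h; have e2 := hidx1 σ y h0' h'
      exact hsame 1 h h' (by omega)
    · have e1 := hidx1 σ x h0 h; have e2 := hidx2 σ y h0' h1' h'; omega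
    · have e1 := hidx2 σ x h0 h1 h; have e2 := hidx0 σ y h'; omega
    · have e1 := hidx2 σ x h0 h1 h; have e2 := hidx1 σ y h0' h'; omega
    · have e1 := hidx2 σ x h0 h1 h; have e2 := hidx2 σ y h0' h1' h'
      exact hsame 2 h h' (by omega)
  have hginj : ∀ σ : α ↪ Fin n, Function.Injective (gfun B σ) := by
    intro σ x y hxy
    by_cases hx : x ∈ bU B <;> by_cases hy : y ∈ bU B
    · rw [hg_in σ x hx, hg_in σ y hy] at hxy
      have := (kap B σ).injective hxy
      have hval : idx B σ x = idx B σ y := congrArg Fin.val this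
      exact hidxinj σ x hx y hy hval
    · exfalso
      rw [hg_in σ x hx, hg_out σ y hy] at hxy
      exact hnotpset σ y hy (hxy ▸ hkapmem σ _)
    · exfalso
      rw [hg_out σ x hx, hg_in σ y hy] at hxy
      exact hnotpset σ x hx (hxy ▸ hkapmem σ _)
    · rw [hg_out σ x hx, hg_out σ y hy] at hxy
      exact σ.injective hxy
  have hOrdg : ∀ σ : α ↪ Fin n, ∀ p q : Fin 3, p < q → ∀ x ∈ B p, ∀ y ∈ B q,
      gfun B σ x < gfun B σ y := by
    intro σ p q hpq x hx y hy
    rw [hg_in σ x (hUmem hx), hg_in σ y (hUmem hy)]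
    apply (kap B σ).strictMono
    rw [Fin.mk_lt_mk]
    fin_cases p <;> fin_cases q <;>
      first
        | exact absurd hpq (by decide)
        | skip
    · have hy0 : y ∉ B 0 := fun h => Finset.disjoint_left.1 hd01 h hy
      have e1 := hidx0 σ x hx; have e2 := hidx1 σ y hy0 hy; omega
    · have hy0 : y ∉ B 0 := fun h => Finset.disjoint_left.1 hd02 h hy
      have hy1 : y ∉ B 1 := fun h => Finset.disjoint_left.1 hd12 h hy
      have e1 := hidx0 σ x hx; have e2 := hidx2 σ y hy0 hy1 hy; omega
    · have hx0 : x ∉ B 0 := fun h => Finset.disjoint_left.1 hd01 h hx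
      have hy0 : y ∉ B 0 := fun h => Finset.disjoint_left.1 hd02 h hy
      have hy1 : y ∉ B 1 := fun h => Finset.disjoint_left.1 hd12 h hy
      have e1 := hidx1 σ x hx0 hx; have e2 := hidx2 σ y hy0 hy1 hy; omega
  have hXimg : ∀ σ : α ↪ Fin n, (codeX B σ).image (kap B σ) = img B σ 0 := by
    intro σ
    apply Finset.Subset.antisymm
    · intro v hv
      rw [Finset.mem_image] at hv
      obtain ⟨k, hk, he⟩ := hv
      rw [codeX, Finset.mem_filter] at hk
      exact he ▸ hk.2
    · intro v hv
      obtain ⟨k, hk⟩ := hkapsurj σ v (himgsub σ 0 hv)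
      rw [Finset.mem_image]
      exact ⟨k, by rw [codeX, Finset.mem_filter]; exact ⟨Finset.mem_univ _, hk ▸ hv⟩, hk⟩
  have hYimg : ∀ σ : α ↪ Fin n, (codeY B σ).image (kap B σ) = img B σ 1 := by
    intro σ
    apply Finset.Subset.antisymm
    · intro v hv
      rw [Finset.mem_image] at hv
      obtain ⟨k, hk, he⟩ := hv
      rw [codeY, Finset.mem_filter] at hk
      exact he ▸ hk.2
    · intro v hv
      obtain ⟨k, hk⟩ := hkapsurj σ v (himgsub σ 1 hv)
      rw [Finset.mem_image]
      exact ⟨k, by rw [codeY, Finset.mem_filter]; exact ⟨Finset.mem_univ _, hk ▸ hv⟩, hk⟩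
  have hXcard : ∀ σ : α ↪ Fin n, (codeX B σ).card = a := by
    intro σ
    have := congrArg Finset.card (hXimg σ)
    rw [Finset.card_image_of_injective _ (kap B σ).injective, himgcard σ 0] at this
    exact this
  have hYcard : ∀ σ : α ↪ Fin n, (codeY B σ).card = b := by
    intro σ
    have := congrArg Finset.card (hYimg σ)
    rw [Finset.card_image_of_injective _ (kap B σ).injective, himgcard σ 1] at this
    exact this
  have hmemD : ∀ σ : α ↪ Fin n, (⟨codeX B σ, codeY B σ⟩ :
      (_ : Finset (Fin u)) × Finset (Fin u)) ∈ D := by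
    intro σ
    rw [hD, Finset.mem_sigma]
    constructor
    · rw [Finset.mem_powersetCard]
      exact ⟨Finset.subset_univ _, hXcard σ⟩
    · rw [Finset.mem_powersetCard]
      refine ⟨?_, hYcard σ⟩
      intro k hk
      rw [codeY, Finset.mem_filter] at hk
      rw [Finset.mem_compl, codeX, Finset.mem_filter]
      intro hk2
      exact Finset.disjoint_left.1 (himgdisj σ 0 1 (by decide)) hk2.2 hk.2
  -- the injection
  set Φ : (α ↪ Fin n) → ({σ : α ↪ Fin n // Ord3 B σ} ×
      {x : (_ : Finset (Fin u)) × Finset (Fin u) // x ∈ D}) :=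
    fun σ => (⟨⟨gfun B σ, hginj σ⟩, hOrdg σ⟩, ⟨⟨codeX B σ, codeY B σ⟩, hmemD σ⟩) with hΦ
  have hΦinj : Function.Injective Φ := by
    intro σ₁ σ₂ h
    rw [hΦ] at h
    have hgemb : (⟨gfun B σ₁, hginj σ₁⟩ : α ↪ Fin n) = ⟨gfun B σ₂, hginj σ₂⟩ :=
      Subtype.ext_iff.1 (congrArg Prod.fst h)
    have h2 : (⟨codeX B σ₁, codeY B σ₁⟩ : (_ : Finset (Fin u)) × Finset (Fin u))
        = ⟨codeX B σ₂, codeY B σ₂⟩ := Subtype.ext_iff.1 (congrArg Prod.snd h)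
    rw [Sigma.ext_iff] at h2
    have hX12 : codeX B σ₁ = codeX B σ₂ := h2.1
    have hY12 : codeY B σ₁ = codeY B σ₂ := eq_of_heq h2.2
    have hg : ∀ x, gfun B σ₁ x = gfun B σ₂ x := fun x =>
      congrFun (congrArg (fun (e : α ↪ Fin n) => (e : α → Fin n)) hgemb) x
    have hUg : ∀ σ : α ↪ Fin n, (bU B).image (gfun B σ) = pset B σ := by
      intro σ
      apply Finset.eq_of_subset_of_card_le
      · intro v hv
        rw [Finset.mem_image] at hv
        obtain ⟨x, hx, he⟩ := hv
        rw [hg_in σ x hx] at he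
        exact he ▸ hkapmem σ _
      · rw [pset_card, Finset.card_image_of_injective _ (hginj σ)]
    have hpset12 : pset B σ₁ = pset B σ₂ := by
      rw [← hUg σ₁, ← hUg σ₂]
      exact Finset.image_congr (fun x _ => hg x)
    have horder : ∀ (Q R : Finset (Fin n)) (h : Q = R) (hQ : Q.card = (bU B).card)
        (hR : R.card = (bU B).card) (k : Fin (bU B).card),
        Q.orderEmbOfFin hQ k = R.orderEmbOfFin hR k := by
      intro Q R h hQ hR k
      subst h
      rfl
    have hkap12 : ∀ k, kap B σ₁ k = kap B σ₂ k := fun k =>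
      horder _ _ hpset12 (pset_card B σ₁) (pset_card B σ₂) k
    have himg0 : img B σ₁ 0 = img B σ₂ 0 := by
      rw [← hXimg σ₁, ← hXimg σ₂, hX12]
      exact Finset.image_congr (fun k _ => hkap12 k)
    have himg1 : img B σ₁ 1 = img B σ₂ 1 := by
      rw [← hYimg σ₁, ← hYimg σ₂, hY12]
      exact Finset.image_congr (fun k _ => hkap12 k)
    have himg2aux : ∀ σ : α ↪ Fin n, img B σ 2 = pset B σ \ (img B σ 0 ∪ img B σ 1) := by
      intro σ
      ext v
      rw [Finset.mem_sdiff, Finset.mem_union, hpset_eq σ]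
      constructor
      · intro hv
        refine ⟨Finset.mem_union_right _ hv, ?_⟩
        rintro (h | h)
        · exact Finset.disjoint_left.1 (himgdisj σ 0 2 (by decide)) h hv
        · exact Finset.disjoint_left.1 (himgdisj σ 1 2 (by decide)) h hv
      · rintro ⟨hv, hv2⟩
        rw [Finset.mem_union, Finset.mem_union] at hv
        tauto
    have himg2 : img B σ₁ 2 = img B σ₂ 2 := by
      rw [himg2aux σ₁, himg2aux σ₂, hpset12, himg0, himg1]
    have himgeq : ∀ r : Fin 3, img B σ₁ r = img B σ₂ r := by
      intro r
      fin_cases r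
      exacts [himg0, himg1, himg2]
    apply Function.Embedding.ext
    intro x
    by_cases hx : x ∈ bU B
    · have hgx := hg x
      rw [hg_in σ₁ x hx, hg_in σ₂ x hx] at hgx
      rw [hkap12] at hgx
      have hvale : idx B σ₁ x = idx B σ₂ x :=
        congrArg Fin.val ((kap B σ₂).injective hgx)
      have hrkeq : ∀ r : Fin 3, x ∈ B r →
          rkIn (img B σ₂ r) (σ₁ x) = rkIn (img B σ₂ r) (σ₂ x) → σ₁ x = σ₂ x := by
        intro r hxr hrk
        exact rkIn_injOn (himgeq r ▸ hmemimg σ₁ r x hxr) (hmemimg σ₂ r x hxr) hrk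
      rcases hcase x hx with h | ⟨h0, h⟩ | ⟨h0, h1, h⟩
      · have e1 := (hidx0 σ₁ x h).1; have e2 := (hidx0 σ₂ x h).1
        rw [himg0] at e1
        exact hrkeq 0 h (by omega)
      · have e1 := (hidx1 σ₁ x h0 h).1; have e2 := (hidx1 σ₂ x h0 h).1
        rw [himg1] at e1
        exact hrkeq 1 h (by omega)
      · have e1 := (hidx2 σ₁ x h0 h1 h).1; have e2 := (hidx2 σ₂ x h0 h1 h).1
        rw [himg2] at e1
        exact hrkeq 2 h (by omega)
    · have hgx := hg x
      rw [hg_out σ₁ x hx, hg_out σ₂ x hx] at hgx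
      exact hgx
  have hcard1 : Fintype.card (α ↪ Fin n) = Nat.factorial n := by
    rw [Fintype.card_embedding_eq, Fintype.card_fin, ← hn, Nat.descFactorial_self]
  have hle := Fintype.card_le_of_injective Φ hΦinj
  rw [hcard1, Fintype.card_prod, Fintype.card_coe, hDcard] at hle
  rw [hmult, mul_comm]
  exact hle



set_option maxHeartbeats 1000000 in
/-- **Theorem (Bollobás systems of 3-partitions).** If
`{(A_i^{(1)}, A_i^{(2)}, A_i^{(3)})}_{1 ≤ i ≤ m}` is a Bollobás system of
`3`-partitions of `[n]`, `S = ⋃_i ⋃_r A_i^{(r)}` and `s = |S|`, then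
`∑_i multinomial(|A_i^{(1)}|, |A_i^{(2)}|, |A_i^{(3)}|)⁻¹ ≤ ⌊s/2⌋ + 1`. -/
theorem bollobas_three_partitions_bound (n m : ℕ)
    (A : Fin m → Fin 3 → Finset ℕ)
    (hAsub : ∀ i r, A i r ⊆ Finset.Icc 1 n)
    (hAdisj : ∀ i, ∀ p q : Fin 3, p ≠ q → Disjoint (A i p) (A i q))
    (hB : ∀ i j : Fin m, i ≠ j →
      ∃ p q : Fin 3, p < q ∧ ((A i p) ∩ (A j q)).Nonempty) :
    ∑ i : Fin m,
        ((Nat.multinomial Finset.univ fun r : Fin 3 => (A i r).card : ℕ) : ℚ)⁻¹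
      ≤ (((Finset.univ.biUnion fun i : Fin m =>
            Finset.univ.biUnion fun r : Fin 3 => A i r).card / 2 + 1 : ℕ) : ℚ) := by
  classical
  set S : Finset ℕ := Finset.univ.biUnion fun i : Fin m =>
      Finset.univ.biUnion fun r : Fin 3 => A i r with hS
  have hsubS : ∀ i r, A i r ⊆ S := by
    intro i r x hx
    rw [hS, Finset.mem_biUnion]
    exact ⟨i, Finset.mem_univ _, Finset.mem_biUnion.2 ⟨r, Finset.mem_univ _, hx⟩⟩
  set Bb : Fin m → Fin 3 → Finset {x // x ∈ S} :=
    fun i r => (A i r).subtype (· ∈ S) with hBb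
  have hBmem : ∀ (i r) (x : {x // x ∈ S}), x ∈ Bb i r ↔ (x : ℕ) ∈ A i r := by
    intro i r x
    rw [hBb]
    exact Finset.mem_subtype
  have hBcard : ∀ i r, (Bb i r).card = (A i r).card := by
    intro i r
    rw [hBb]
    rw [Finset.card_subtype]
    congr 1
    exact Finset.filter_true_of_mem (fun x hx => hsubS i r hx)
  have hdB : ∀ i, ∀ p q : Fin 3, p ≠ q → Disjoint (Bb i p) (Bb i q) := by
    intro i p q hpq
    rw [Finset.disjoint_left]
    intro x hx hx2
    rw [hBmem] at hx hx2
    exact Finset.disjoint_left.1 (hAdisj i p q hpq) hx hx2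
  have hBB : ∀ i j : Fin m, i ≠ j →
      ∃ p q : Fin 3, p < q ∧ (Bb i p ∩ Bb j q).Nonempty := by
    intro i j hij
    obtain ⟨p, q, hpq, x, hx⟩ := hB i j hij
    rw [Finset.mem_inter] at hx
    refine ⟨p, q, hpq, ⟨⟨x, hsubS i p hx.1⟩, ?_⟩⟩
    rw [Finset.mem_inter, hBmem, hBmem]
    exact hx
  set n' := Fintype.card {x // x ∈ S} with hn'
  have hScard : n' = S.card := Fintype.card_coe S
  set Nf : Fin m → ℕ := fun i =>
    (Finset.univ.filter (fun σ : {x // x ∈ S} ↪ Fin n' => Ord3 (Bb i) σ)).card with hNf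
  have hstep2 : ∀ i, Nat.factorial n' ≤
      Nat.multinomial Finset.univ (fun r => (A i r).card) * Nf i := by
    intro i
    have h := count_ord (Bb i) (hdB i)
    have he : (fun r => (Bb i r).card) = fun r : Fin 3 => (A i r).card :=
      funext fun r => hBcard i r
    rw [he] at h
    have hcardeq : Fintype.card {σ : {x // x ∈ S} ↪ Fin n' // Ord3 (Bb i) σ} = Nf i :=
      Fintype.card_subtype _
    rw [hcardeq] at h
    exact h
  have hpoint : ∀ σ : {x // x ∈ S} ↪ Fin n',
      (Finset.univ.filter (fun i => Ord3 (Bb i) σ)).card ≤ n' / 2 + 1 := by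
    intro σ
    exact pointwise Bb σ hdB hBB _ (fun i hi => (Finset.mem_filter.1 hi).2)
  have hΩcard : Fintype.card ({x // x ∈ S} ↪ Fin n') = Nat.factorial n' := by
    rw [Fintype.card_embedding_eq, Fintype.card_fin, ← hn', Nat.descFactorial_self]
  have hsum : ∑ i : Fin m, Nf i ≤ Nat.factorial n' * (n' / 2 + 1) := by
    have h1 : ∀ i : Fin m, Nf i = ∑ σ : {x // x ∈ S} ↪ Fin n',
        if Ord3 (Bb i) σ then 1 else 0 := by
      intro i
      simp only [hNf]
      rw [Finset.card_filter]
    have h2 : ∀ σ : {x // x ∈ S} ↪ Fin n',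
        (∑ i : Fin m, if Ord3 (Bb i) σ then 1 else 0)
          = (Finset.univ.filter (fun i => Ord3 (Bb i) σ)).card := by
      intro σ
      rw [Finset.card_filter]
    calc ∑ i : Fin m, Nf i
        = ∑ i : Fin m, ∑ σ : {x // x ∈ S} ↪ Fin n', if Ord3 (Bb i) σ then 1 else 0 := by
          exact Finset.sum_congr rfl fun i _ => h1 i
      _ = ∑ σ : {x // x ∈ S} ↪ Fin n', ∑ i : Fin m, if Ord3 (Bb i) σ then 1 else 0 :=
          Finset.sum_comm
      _ = ∑ σ : {x // x ∈ S} ↪ Fin n',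
            (Finset.univ.filter (fun i => Ord3 (Bb i) σ)).card :=
          Finset.sum_congr rfl fun σ _ => h2 σ
      _ ≤ ∑ _σ : {x // x ∈ S} ↪ Fin n', (n' / 2 + 1) :=
          Finset.sum_le_sum fun σ _ => hpoint σ
      _ = Fintype.card ({x // x ∈ S} ↪ Fin n') * (n' / 2 + 1) := by
          rw [Finset.sum_const, Finset.card_univ, smul_eq_mul]
      _ = Nat.factorial n' * (n' / 2 + 1) := by rw [hΩcard]
  have hFpos : (0 : ℚ) < (Nat.factorial n' : ℚ) := by
    exact_mod_cast Nat.factorial_pos n'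
  have hterm : ∀ i : Fin m,
      ((Nat.multinomial Finset.univ fun r : Fin 3 => (A i r).card : ℕ) : ℚ)⁻¹
        ≤ (Nf i : ℚ) / (Nat.factorial n' : ℚ) := by
    intro i
    have hmpos : (0 : ℚ) < ((Nat.multinomial Finset.univ
        fun r : Fin 3 => (A i r).card : ℕ) : ℚ) := by
      exact_mod_cast Nat.multinomial_pos _ _
    rw [inv_eq_one_div, div_le_div_iff₀ hmpos hFpos]
    have h := hstep2 i
    have hq : (Nat.factorial n' : ℚ) ≤ ((Nat.multinomial Finset.univ
        fun r : Fin 3 => (A i r).card : ℕ) : ℚ) * (Nf i : ℚ) := by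
      exact_mod_cast h
    linarith
  calc ∑ i : Fin m,
        ((Nat.multinomial Finset.univ fun r : Fin 3 => (A i r).card : ℕ) : ℚ)⁻¹
      ≤ ∑ i : Fin m, (Nf i : ℚ) / (Nat.factorial n' : ℚ) :=
        Finset.sum_le_sum fun i _ => hterm i
    _ = (∑ i : Fin m, (Nf i : ℚ)) / (Nat.factorial n' : ℚ) := by
        rw [Finset.sum_div]
    _ ≤ ((n' / 2 + 1 : ℕ) : ℚ) := by
        rw [div_le_iff₀ hFpos]
        have : ((∑ i : Fin m, Nf i : ℕ) : ℚ) ≤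
            ((Nat.factorial n' * (n' / 2 + 1) : ℕ) : ℚ) := by
          exact_mod_cast hsum
        push_cast at this ⊢
        linarith
    _ = ((S.card / 2 + 1 : ℕ) : ℚ) := by rw [hScard]
end

section
/- For every positive integer s there exist a positive integer n and a Bollobás system D = {(A_i^{(1)}, A_i^{(2)}, A_i^{(3)})}_{1≤i≤m} of 3-partitions of [n] with |⋃_{i=1}^m ⋃_{r=1}^3 A_i^{(r)}| = s such that ∑_{i=1}^m binom(|A_i^{(1)}| + |A_i^{(2)}| + |A_i^{(3)}|; |A_i^{(1)}|, |A_i^{(2)}|, |A_i^{(3)}|)^{-1} = ⌊s/2⌋ + 1. In particular, for every s ≥ 2 there is a Bollobás system of 3-partitions of [n] for which this sum is strictly greater than 1, disproving the conjecture of Hegedüs and Frankl that the sum is always at most 1 for Bollobás systems of d-partitions. -/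
/-!
Fix a ground set `X` of size `s` and take all 3-partitions `(a, X \ (a ∪ c), c)` of `X` with
`|a| = |c|`. If two distinct such partitions `x, y` violated the Bollobás condition, every element
of `x.1` would lie in `y.1` and every element of `y.2` in `x.2`; equal sizes then give `x = y`.
For each `k ≤ s / 2` there are exactly `binom(s; k, s - 2k, k)` partitions with `|a| = k`, each
of weight `binom(s; k, s - 2k, k)⁻¹`, so every `k` contributes `1` to the sum.
-/

open Finset

theorem Nat.multinomial_univ_three_eq_choose_mul_choose (a b c : ℕ) :
    Nat.multinomial univ ![a, b, c] = (a + b + c).choose a * (b + c).choose b := by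
  have huniv : (univ : Finset (Fin 3)) = insert 0 {1, 2} := by decide
  rw [huniv, Nat.multinomial_insert (by decide), Nat.binomial_eq_choose (by decide),
    sum_pair (by decide)]
  simp [add_assoc]

namespace Bollobas

variable {α : Type*} [DecidableEq α]

def middlePartition (X : Finset α) (x : Finset α × Finset α) : Fin 3 → Finset α :=
  ![x.1, X \ (x.1 ∪ x.2), x.2]

def balancedPairs (X : Finset α) : Finset (Finset α × Finset α) :=
  {x ∈ X.powerset ×ˢ X.powerset | Disjoint x.1 x.2 ∧ #x.1 = #x.2}

variable {X : Finset α} {x y : Finset α × Finset α}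

lemma mem_balancedPairs :
    x ∈ balancedPairs X ↔ x.1 ⊆ X ∧ x.2 ⊆ X ∧ Disjoint x.1 x.2 ∧ #x.1 = #x.2 := by
  simp [balancedPairs, and_assoc]

lemma empty_mem_balancedPairs : ((∅, ∅) : Finset α × Finset α) ∈ balancedPairs X := by
  simp [mem_balancedPairs]

lemma middlePartition_subset (hx : x ∈ balancedPairs X) (r : Fin 3) :
    middlePartition X x r ⊆ X := by
  obtain ⟨h1, h2, -⟩ := mem_balancedPairs.1 hx
  fin_cases r
  · exact h1
  · exact sdiff_subset
  · exact h2

lemma disjoint_middlePartition (hx : Disjoint x.1 x.2) {p q : Fin 3} (hpq : p ≠ q) :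
    Disjoint (middlePartition X x p) (middlePartition X x q) := by
  fin_cases p <;> fin_cases q <;> simp_all [middlePartition, disjoint_left, imp_not_comm]

lemma card_middlePartition_one (hx : x ∈ balancedPairs X) :
    #(middlePartition X x 1) = #X - 2 * #x.1 := by
  obtain ⟨h1, h2, hd, hc⟩ := mem_balancedPairs.1 hx
  simp only [middlePartition, Matrix.cons_val_one, Matrix.cons_val_zero]
  rw [card_sdiff_of_subset (union_subset h1 h2), card_union_of_disjoint hd]
  omega

lemma two_mul_card_fst_le (hx : x ∈ balancedPairs X) : 2 * #x.1 ≤ #X := by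
  obtain ⟨h1, h2, hd, hc⟩ := mem_balancedPairs.1 hx
  have := card_le_card (union_subset h1 h2)
  rw [card_union_of_disjoint hd] at this
  omega

lemma multinomial_middlePartition (hx : x ∈ balancedPairs X) :
    Nat.multinomial univ (fun r => #(middlePartition X x r)) =
      (#X).choose #x.1 * (#X - #x.1).choose #x.1 := by
  have hc := (mem_balancedPairs.1 hx).2.2.2
  have hcard : (fun r => #(middlePartition X x r)) = ![#x.1, #X - 2 * #x.1, #x.1] := by
    ext r
    fin_cases r
    · rfl
    · exact card_middlePartition_one hx
    · exact hc.symm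
  have := two_mul_card_fst_le hx
  rw [hcard, Nat.multinomial_univ_three_eq_choose_mul_choose,
    show #x.1 + (#X - 2 * #x.1) + #x.1 = #X by omega,
    show #X - 2 * #x.1 + #x.1 = #X - #x.1 by omega, Nat.choose_symm_of_eq_add
      (show #X - #x.1 = (#X - 2 * #x.1) + #x.1 by omega)]

lemma filter_balancedPairs_card_eq (k : ℕ) :
    {x ∈ balancedPairs X | #x.1 = k} =
      (X.powersetCard k).biUnion fun a => ((X \ a).powersetCard k).image (a, ·) := by
  ext ⟨a, c⟩
  simp only [mem_filter, mem_balancedPairs, mem_biUnion, mem_image, mem_powersetCard,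
    subset_sdiff, Prod.mk.injEq]
  constructor
  · rintro ⟨⟨ha, hc, hac, hcard⟩, rfl⟩
    exact ⟨a, ⟨ha, rfl⟩, c, ⟨⟨hc, hac.symm⟩, hcard.symm⟩, rfl, rfl⟩
  · rintro ⟨a, ⟨ha, rfl⟩, c, ⟨⟨hc, hca⟩, hcard⟩, rfl, rfl⟩
    exact ⟨⟨ha, hc, hca.symm, hcard.symm⟩, rfl⟩

lemma card_filter_balancedPairs_card_eq (k : ℕ) :
    #{x ∈ balancedPairs X | #x.1 = k} = (#X).choose k * (#X - k).choose k := by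
  rw [filter_balancedPairs_card_eq, card_biUnion]
  · rw [sum_const_nat fun a ha => ?_, card_powersetCard]
    rw [card_image_of_injective _ (Prod.mk_right_injective a), card_powersetCard,
      card_sdiff_of_subset (mem_powersetCard.1 ha).1, (mem_powersetCard.1 ha).2]
  · intro a _ b _ hab
    simp only [disjoint_left, mem_image]
    rintro _ ⟨c, -, rfl⟩ ⟨c', -, h⟩
    exact hab (Prod.mk.inj h).1.symm

theorem sum_inv_multinomial_middlePartition :
    ∑ x ∈ balancedPairs X,
        ((Nat.multinomial univ fun r => #(middlePartition X x r) : ℕ) : ℚ)⁻¹ =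
      ((#X / 2 + 1 : ℕ) : ℚ) := by
  rw [← sum_fiberwise_of_maps_to (g := fun x => #x.1) (t := range (#X / 2 + 1))
    fun x hx => mem_range.2 (by have := two_mul_card_fst_le hx; omega)]
  calc ∑ k ∈ range (#X / 2 + 1), ∑ x ∈ balancedPairs X with #x.1 = k,
        ((Nat.multinomial univ fun r => #(middlePartition X x r) : ℕ) : ℚ)⁻¹
      = ∑ k ∈ range (#X / 2 + 1), (1 : ℚ) := sum_congr rfl fun k hk => ?_
    _ = _ := by simp
  have hk : 2 * k ≤ #X := by have := mem_range.1 hk; omega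
  rw [sum_congr rfl fun x hx => by rw [multinomial_middlePartition (mem_filter.1 hx).1,
    (mem_filter.1 hx).2], sum_const, card_filter_balancedPairs_card_eq, nsmul_eq_mul,
    mul_inv_cancel₀]
  exact_mod_cast (Nat.mul_pos (Nat.choose_pos (by omega)) (Nat.choose_pos (by omega))).ne'

lemma subset_of_disjoint_sdiff_union {a b c : Finset α} (ha : a ⊆ X)
    (hab : Disjoint a (X \ (b ∪ c))) (hac : Disjoint a c) : a ⊆ b := by
  intro e he
  by_contra hb
  exact disjoint_left.1 hab he (mem_sdiff.2 ⟨ha he, by simp [hb, disjoint_left.1 hac he]⟩)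

theorem exists_lt_inter_middlePartition_nonempty (hx : x ∈ balancedPairs X)
    (hy : y ∈ balancedPairs X) (hxy : x ≠ y) :
    ∃ p q : Fin 3, p < q ∧ (middlePartition X x p ∩ middlePartition X y q).Nonempty := by
  by_contra! h
  simp only [← disjoint_iff_inter_eq_empty] at h
  obtain ⟨hx1, -, -, hxc⟩ := mem_balancedPairs.1 hx
  obtain ⟨-, hy2, -, hyc⟩ := mem_balancedPairs.1 hy
  have h1 : x.1 ⊆ y.1 :=
    subset_of_disjoint_sdiff_union hx1 (h 0 1 (by decide)) (h 0 2 (by decide))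
  have h2 : y.2 ⊆ x.2 := subset_of_disjoint_sdiff_union hy2
    (by simpa [middlePartition, union_comm] using (h 1 2 (by decide)).symm)
    (h 0 2 (by decide)).symm
  have := card_le_card h1
  have := card_le_card h2
  exact hxy (Prod.ext (eq_of_subset_of_card_le h1 (by omega))
    (eq_of_subset_of_card_le h2 (by omega)).symm)

end Bollobas

open Bollobas in
theorem bollobas_three_partitions_tight_general (s : ℕ) :
    ∃ n m : ℕ, ∃ A : Fin m → Fin 3 → Finset ℕ,
      (∀ i r, A i r ⊆ Finset.Icc 1 n) ∧
      (∀ i, ∀ p q : Fin 3, p ≠ q → Disjoint (A i p) (A i q)) ∧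
      (∀ i j : Fin m, i ≠ j →
        ∃ p q : Fin 3, p < q ∧ ((A i p) ∩ (A j q)).Nonempty) ∧
      (Finset.univ.biUnion fun i : Fin m =>
        Finset.univ.biUnion fun r : Fin 3 => A i r).card = s ∧
      ∑ i : Fin m,
          ((Nat.multinomial Finset.univ fun r : Fin 3 => (A i r).card : ℕ) : ℚ)⁻¹
        = ((s / 2 + 1 : ℕ) : ℚ) ∧
      (2 ≤ s → (1 : ℚ) < ∑ i : Fin m,
          ((Nat.multinomial Finset.univ fun r : Fin 3 => (A i r).card : ℕ) : ℚ)⁻¹) := by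
  set X := Icc 1 s
  let e := (balancedPairs X).equivFin
  let w (x : Finset ℕ × Finset ℕ) : ℚ :=
    ((Nat.multinomial univ fun r => #(middlePartition X x r) : ℕ) : ℚ)⁻¹
  have hsum : ∑ i, w (e.symm i) = ((s / 2 + 1 : ℕ) : ℚ) := by
    rw [e.symm.sum_comp (w ·), sum_coe_sort (balancedPairs X) w,
      sum_inv_multinomial_middlePartition, Nat.card_Icc, Nat.add_sub_cancel]
  have hunion : univ.biUnion (fun i => univ.biUnion (middlePartition X (e.symm i))) = X :=
    (biUnion_subset.2 fun i _ => biUnion_subset.2 fun r _ =>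
      middlePartition_subset (e.symm i).2 r).antisymm fun a ha =>
        mem_biUnion.2 ⟨e ⟨_, empty_mem_balancedPairs⟩, mem_univ _,
          mem_biUnion.2 ⟨1, mem_univ _, by simpa [middlePartition] using ha⟩⟩
  refine ⟨s, _, fun i => middlePartition X (e.symm i),
    fun i => middlePartition_subset (e.symm i).2,
    fun i _ _ => disjoint_middlePartition (mem_balancedPairs.1 (e.symm i).2).2.2.1,
    fun i j hij => exists_lt_inter_middlePartition_nonempty (e.symm i).2 (e.symm j).2
      (Subtype.coe_injective.ne (e.symm.injective.ne hij)), by rw [hunion, Nat.card_Icc]; omega,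
    hsum, fun hs => ?_⟩
  rw [hsum]
  exact_mod_cast (show 1 < s / 2 + 1 by omega)

/-- **Theorem (disproof of the Hegedüs–Frankl conjecture).** For every positive
integer `s` there exist `n` and a Bollobás system of `3`-partitions of `[n]` with
support of size `s` whose weighted sum equals `⌊s/2⌋ + 1`; in particular for
`s ≥ 2` the sum exceeds `1`, disproving the conjecture. -/
theorem bollobas_three_partitions_tight (s : ℕ) (hs : 1 ≤ s) :
    ∃ n m : ℕ, ∃ A : Fin m → Fin 3 → Finset ℕ,
      (∀ i r, A i r ⊆ Finset.Icc 1 n) ∧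
      (∀ i, ∀ p q : Fin 3, p ≠ q → Disjoint (A i p) (A i q)) ∧
      (∀ i j : Fin m, i ≠ j →
        ∃ p q : Fin 3, p < q ∧ ((A i p) ∩ (A j q)).Nonempty) ∧
      (Finset.univ.biUnion fun i : Fin m =>
        Finset.univ.biUnion fun r : Fin 3 => A i r).card = s ∧
      ∑ i : Fin m,
          ((Nat.multinomial Finset.univ fun r : Fin 3 => (A i r).card : ℕ) : ℚ)⁻¹
        = ((s / 2 + 1 : ℕ) : ℚ) ∧
      (2 ≤ s → (1 : ℚ) < ∑ i : Fin m,
          ((Nat.multinomial Finset.univ fun r : Fin 3 => (A i r).card : ℕ) : ℚ)⁻¹) :=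
  bollobas_three_partitions_tight_general s
end
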